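/- arXiv:2111.06231 — 6 statements merged into one kernel-verified Lean document; each statement's English description precedes it below -/
import Mathlib

section
/- There exists exactly one Borel measurable function m : [0,∞) → [0, λ*] satisfying the fixed-point equation m(t) = Ī(0) λ̄⁰(t) + S̄(0) ∫₀ᵗ λ̄(t−s) m(s) exp(−∫₀ˢ m(r) dr) ds for all t ≥ 0; moreover this unique fixed point m equals F̄, the second component of the unique solution (S̄, F̄) of the homogeneous limit system. -/
/-!
Write `M(t) = ∫₀ᵗ m`. Since `e^{-M}` is Lipschitz, the fundamental theorem of calculus for
absolutely continuous functions gives `∫₀ᵗ m e^{-M} = 1 - e^{-M(t)} ≤ 1`; with `Ī(0) + S̄(0) ≤ 1`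
this makes the fixed-point map `Φ` preserve functions with values in `[0, λ*]`. On `[0, T]` the
map satisfies the Volterra-type estimate `|Φ m - Φ m'|(t) ≤ K ∫₀ᵗ |m - m'|`, so the differences
of the Picard iterates from `0` are bounded by `λ* (K t)ⁿ / n!`: the iterates converge to a fixed
point, and the same iterated estimate (Gronwall) gives uniqueness. For a solution `(S̄, F̄)` of the
limit system, `F̄ ≤ λ*` and `S̄ - S̄(0) e^{-∫F̄}` solves a homogeneous linear Volterra equation, so
`S̄ = S̄(0) e^{-∫F̄}`; substituted into the equation for `F̄`, this makes `F̄` a fixed point.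
-/

open MeasureTheory

/-- A solution of the homogeneous limit system. -/
def IsHomSol (lam0 lam : ℝ → ℝ) (S0 I0 : ℝ) (S F : ℝ → ℝ) : Prop :=
  Measurable S ∧ Measurable F ∧
  (∀ t : ℝ, 0 ≤ t → 0 ≤ S t) ∧ (∀ t : ℝ, 0 ≤ t → 0 ≤ F t) ∧
  (∀ T : ℝ, ∃ C : ℝ, ∀ t ∈ Set.Icc (0:ℝ) T, S t ≤ C ∧ F t ≤ C) ∧
  (∀ t : ℝ, 0 ≤ t → S t = S0 - ∫ s in (0:ℝ)..t, S s * F s) ∧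
  (∀ t : ℝ, 0 ≤ t → F t = I0 * lam0 t + ∫ s in (0:ℝ)..t, lam (t - s) * S s * F s)

open Set Filter Topology Function
open scoped Interval

namespace HomogeneousLimit

theorem intervalIntegrable_of_abs_le {g : ℝ → ℝ} (hg : Measurable g) {a b C : ℝ} (hab : a ≤ b)
    (hC : ∀ s ∈ Ioc a b, |g s| ≤ C) : IntervalIntegrable g volume a b := by
  rw [intervalIntegrable_iff_integrableOn_Ioc_of_le hab]
  exact Measure.integrableOn_of_bounded measure_Ioc_lt_top.ne hg.aestronglyMeasurable
    ((ae_restrict_iff' measurableSet_Ioc).2 (ae_of_all _ hC))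

theorem measurable_intervalIntegral_zero {f : ℝ → ℝ → ℝ} (hf : Measurable (uncurry f)) :
    Measurable fun t => ∫ s in (0:ℝ)..t, f t s := by
  have hpart : ∀ {a b : ℝ → ℝ}, Measurable a → Measurable b →
      Measurable fun t => ∫ s, (Ioc (a t) (b t)).indicator (f t) s := by
    intro a b ha hb
    have hset : MeasurableSet {p : ℝ × ℝ | p.2 ∈ Ioc (a p.1) (b p.1)} :=
      (measurableSet_lt (ha.comp measurable_fst) measurable_snd).inter
        (measurableSet_le measurable_snd (hb.comp measurable_fst))
    have huncurry : uncurry (fun t s => (Ioc (a t) (b t)).indicator (f t) s)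
        = {p : ℝ × ℝ | p.2 ∈ Ioc (a p.1) (b p.1)}.indicator (uncurry f) := by
      ext ⟨t, s⟩
      simp [indicator_apply]
    exact (StronglyMeasurable.integral_prod_right
      (huncurry ▸ (hf.indicator hset).stronglyMeasurable)).measurable
  simp_rw [intervalIntegral, ← MeasureTheory.integral_indicator measurableSet_Ioc]
  exact (hpart measurable_const measurable_id).sub (hpart measurable_id measurable_const)

theorem le_pow_div_factorial_of_le_integral {d : ℕ → ℝ → ℝ} {T C K : ℝ} (hK : 0 ≤ K)
    (hint : ∀ n, IntervalIntegrable (d n) volume 0 T)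
    (h0 : ∀ s ∈ Icc 0 T, d 0 s ≤ C)
    (hstep : ∀ n, ∀ s ∈ Icc 0 T, d (n + 1) s ≤ K * ∫ r in (0:ℝ)..s, d n r) :
    ∀ n, ∀ s ∈ Icc 0 T, d n s ≤ C * (K * s) ^ n / n.factorial := by
  intro n
  induction n with
  | zero => simpa using h0
  | succ n ih =>
    intro s hs
    have hmono : ∫ r in (0:ℝ)..s, d n r ≤ ∫ r in (0:ℝ)..s, C * K ^ n / n.factorial * r ^ n := by
      refine intervalIntegral.integral_mono_on hs.1
        ((hint n).mono_set (uIcc_subset_uIcc left_mem_uIcc (mem_uIcc_of_le hs.1 hs.2)))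
        (Continuous.intervalIntegrable (by fun_prop) _ _) fun r hr => ?_
      calc d n r ≤ C * (K * r) ^ n / n.factorial := ih r ⟨hr.1, hr.2.trans hs.2⟩
        _ = C * K ^ n / n.factorial * r ^ n := by ring
    calc d (n + 1) s ≤ K * ∫ r in (0:ℝ)..s, d n r := hstep n s hs
      _ ≤ K * ∫ r in (0:ℝ)..s, C * K ^ n / n.factorial * r ^ n := by gcongr
      _ = C * (K * s) ^ (n + 1) / (n + 1).factorial := by
        rw [intervalIntegral.integral_const_mul, integral_pow, Nat.factorial_succ]
        push_cast
        field_simp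
        ring

theorem eq_zero_of_abs_le_integral {u : ℝ → ℝ} {T C K : ℝ} (hK : 0 ≤ K)
    (hu : IntervalIntegrable u volume 0 T) (hC : ∀ s ∈ Icc 0 T, |u s| ≤ C)
    (h : ∀ s ∈ Icc 0 T, |u s| ≤ K * ∫ r in (0:ℝ)..s, |u r|) :
    ∀ s ∈ Icc 0 T, u s = 0 := by
  intro s hs
  have hbound := le_pow_div_factorial_of_le_integral (d := fun _ => fun r => |u r|) hK
    (fun _ => hu.abs) hC (fun _ => h)
  have hlim : Tendsto (fun n : ℕ => C * (K * s) ^ n / n.factorial) atTop (𝓝 0) := by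
    simpa [mul_div_assoc] using (FloorSemiring.tendsto_pow_div_factorial_atTop (K * s)).const_mul C
  exact abs_nonpos_iff.1 (ge_of_tendsto' hlim fun n => hbound n s hs)

/-- The paper's Borel functions `[0, ∞) → [0, B]` (such as `λ̄⁰`, `λ̄` and the candidate fixed
points `m`), extended arbitrarily to `ℝ`. -/
def IsRate (B : ℝ) (f : ℝ → ℝ) : Prop :=
  Measurable f ∧ ∀ t, 0 ≤ t → f t ∈ Icc 0 B

/-- `survival m s` is `S̄(s) / S̄(0)` when `m` is the force of infection. -/
noncomputable def survival (m : ℝ → ℝ) (s : ℝ) : ℝ :=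
  Real.exp (-(∫ r in (0:ℝ)..s, m r))

theorem survival_pos (m : ℝ → ℝ) (s : ℝ) : 0 < survival m s := Real.exp_pos _

theorem survival_zero (m : ℝ → ℝ) : survival m 0 = 1 := by simp [survival]

theorem measurable_survival {m : ℝ → ℝ} (hm : Measurable m) : Measurable (survival m) :=
  (measurable_intervalIntegral_zero (f := fun _ r => m r) (hm.comp measurable_snd)).neg.exp

theorem lipschitzOnWith_exp_neg : LipschitzOnWith 1 (fun x : ℝ => Real.exp (-x)) (Ici 0) := by
  refine (convex_Ici 0).lipschitzOnWith_of_nnnorm_hasDerivWithin_le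
    (fun x _ => ((hasDerivAt_neg x).exp).hasDerivWithinAt) fun x hx => ?_
  rw [← NNReal.coe_le_coe, coe_nnnorm, Real.norm_eq_abs]
  simpa [abs_of_pos (Real.exp_pos _)] using hx

namespace IsRate

variable {B : ℝ} {m m' : ℝ → ℝ}

theorem bound_nonneg (hm : IsRate B m) : 0 ≤ B :=
  (hm.2 0 le_rfl).1.trans (hm.2 0 le_rfl).2

theorem abs_le (hm : IsRate B m) {s : ℝ} (hs : 0 ≤ s) : |m s| ≤ B :=
  (abs_of_nonneg (hm.2 s hs).1).trans_le (hm.2 s hs).2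

theorem abs_sub (hm : IsRate B m) (hm' : IsRate B m') : IsRate B fun s => |m s - m' s| :=
  ⟨(hm.1.sub hm'.1).abs, fun s hs => ⟨abs_nonneg _, abs_sub_le_iff.2
    ⟨by linarith [(hm.2 s hs).2, (hm'.2 s hs).1], by linarith [(hm.2 s hs).1, (hm'.2 s hs).2]⟩⟩⟩

theorem intervalIntegrable (hm : IsRate B m) {a b : ℝ} (ha : 0 ≤ a) (hab : a ≤ b) :
    IntervalIntegrable m volume a b :=
  intervalIntegrable_of_abs_le hm.1 hab fun _ hs => hm.abs_le (ha.trans hs.1.le)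

theorem integral_nonneg (hm : IsRate B m) {s : ℝ} (hs : 0 ≤ s) : 0 ≤ ∫ r in (0:ℝ)..s, m r :=
  intervalIntegral.integral_nonneg hs fun r hr => (hm.2 r hr.1).1

theorem survival_le_one (hm : IsRate B m) {s : ℝ} (hs : 0 ≤ s) : survival m s ≤ 1 :=
  Real.exp_le_one_iff.2 (neg_nonpos.2 (hm.integral_nonneg hs))

theorem mul_survival_le (hm : IsRate B m) {s : ℝ} (hs : 0 ≤ s) : m s * survival m s ≤ B :=
  (mul_le_of_le_one_right (hm.2 s hs).1 (hm.survival_le_one hs)).trans (hm.2 s hs).2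

theorem intervalIntegrable_mul_survival (hm : IsRate B m) {t : ℝ} (ht : 0 ≤ t) :
    IntervalIntegrable (fun s => m s * survival m s) volume 0 t :=
  intervalIntegrable_of_abs_le (hm.1.mul (measurable_survival hm.1)) ht fun _ hs =>
    (abs_of_nonneg (mul_nonneg (hm.2 _ hs.1.le).1 (survival_pos m _).le)).trans_le
      (hm.mul_survival_le hs.1.le)

theorem lipschitzOnWith_integral (hm : IsRate B m) :
    LipschitzOnWith B.toNNReal (fun s => ∫ r in (0:ℝ)..s, m r) (Ici 0) := by
  refine LipschitzOnWith.of_dist_le_mul fun x (hx : 0 ≤ x) y (hy : 0 ≤ y) => ?_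
  rw [Real.dist_eq, Real.dist_eq, intervalIntegral.integral_interval_sub_left
    (hm.intervalIntegrable le_rfl hx) (hm.intervalIntegrable le_rfl hy),
    Real.coe_toNNReal B hm.bound_nonneg]
  simpa using intervalIntegral.norm_integral_le_of_norm_le_const (f := m) fun s hs =>
    (Real.norm_eq_abs _).trans_le (hm.abs_le ((le_min hy hx).trans (uIoc_subset_uIcc hs).1))

theorem lipschitzOnWith_survival (hm : IsRate B m) :
    LipschitzOnWith B.toNNReal (survival m) (Ici 0) := by
  have := lipschitzOnWith_exp_neg.comp hm.lipschitzOnWith_integral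
    fun s hs => hm.integral_nonneg hs
  rwa [one_mul] at this

theorem integral_mul_survival (hm : IsRate B m) {t : ℝ} (ht : 0 ≤ t) :
    ∫ s in (0:ℝ)..t, m s * survival m s = 1 - survival m t := by
  have hac : AbsolutelyContinuousOnInterval (survival m) 0 t :=
    (hm.lipschitzOnWith_survival.mono (by simp [uIcc_of_le ht, Icc_subset_Ici_self]))
      |>.absolutelyContinuousOnInterval
  have hderiv : ∀ᵐ s, s ∈ Ι 0 t → m s * survival m s = -deriv (survival m) s := by
    filter_upwards [(hm.intervalIntegrable le_rfl ht).ae_hasDerivAt_integral] with s hs hsI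
    have hd : HasDerivAt (survival m) (survival m s * -m s) s :=
      (hs (uIoc_subset_uIcc hsI) 0 left_mem_uIcc).neg.exp
    rw [hd.deriv]
    ring
  rw [intervalIntegral.integral_congr_ae hderiv, intervalIntegral.integral_neg,
    hac.integral_deriv_eq_sub, survival_zero]
  ring

theorem abs_survival_sub_le (hm : IsRate B m) (hm' : IsRate B m') {s : ℝ} (hs : 0 ≤ s) :
    |survival m s - survival m' s| ≤ ∫ r in (0:ℝ)..s, |m r - m' r| := by
  have hlip := lipschitzOnWith_exp_neg.dist_le_mul (x := ∫ r in (0:ℝ)..s, m r)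
    (y := ∫ r in (0:ℝ)..s, m' r) (hm.integral_nonneg hs) (hm'.integral_nonneg hs)
  rw [Real.dist_eq, Real.dist_eq, NNReal.coe_one, one_mul, ← intervalIntegral.integral_sub
    (hm.intervalIntegrable le_rfl hs) (hm'.intervalIntegrable le_rfl hs)] at hlip
  exact hlip.trans (intervalIntegral.abs_integral_le_integral_abs hs)

theorem abs_mul_survival_sub_le (hm : IsRate B m) (hm' : IsRate B m') {s : ℝ}
    (hs : 0 ≤ s) : |m s * survival m s - m' s * survival m' s|
      ≤ |m s - m' s| + B * ∫ r in (0:ℝ)..s, |m r - m' r| := by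
  calc |m s * survival m s - m' s * survival m' s|
      = |(m s - m' s) * survival m s + m' s * (survival m s - survival m' s)| := by
        congr 1; ring
    _ ≤ |(m s - m' s) * survival m s| + |m' s * (survival m s - survival m' s)| :=
        abs_add_le _ _
    _ ≤ |m s - m' s| + B * ∫ r in (0:ℝ)..s, |m r - m' r| := by
        rw [abs_mul, abs_mul, abs_of_pos (survival_pos m s), abs_of_nonneg (hm'.2 s hs).1]
        exact add_le_add (mul_le_of_le_one_right (abs_nonneg _) (hm.survival_le_one hs))
          (mul_le_mul (hm'.2 s hs).2 (hm.abs_survival_sub_le hm' hs) (abs_nonneg _)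
            hm.bound_nonneg)

end IsRate

/-- The map whose fixed points are the forces of infection; it is cut off to `0` on `t < 0` so
that its iterates converge there as well. -/
noncomputable def fixedPointMap (lam0 lam : ℝ → ℝ) (I0 S0 : ℝ) (m : ℝ → ℝ) (t : ℝ) : ℝ :=
  if 0 ≤ t then I0 * lam0 t + S0 * ∫ s in (0:ℝ)..t, lam (t - s) * m s * survival m s else 0

structure ModelAssumptions (B : ℝ) (lam0 lam : ℝ → ℝ) (I0 S0 : ℝ) : Prop where
  isRate_lam0 : IsRate B lam0
  isRate_lam : IsRate B lam
  I0_nonneg : 0 ≤ I0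
  S0_nonneg : 0 ≤ S0
  add_le_one : I0 + S0 ≤ 1

section FixedPointMap

variable {B : ℝ} {lam0 lam : ℝ → ℝ} {I0 S0 : ℝ} {m m' : ℝ → ℝ}

theorem fixedPointMap_of_nonneg {t : ℝ} (ht : 0 ≤ t) :
    fixedPointMap lam0 lam I0 S0 m t
      = I0 * lam0 t + S0 * ∫ s in (0:ℝ)..t, lam (t - s) * m s * survival m s :=
  if_pos ht

theorem fixedPointMap_of_neg {t : ℝ} (ht : t < 0) : fixedPointMap lam0 lam I0 S0 m t = 0 :=
  if_neg ht.not_ge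

theorem measurable_fixedPointMap (hlam0 : Measurable lam0) (hlam : Measurable lam)
    (hm : Measurable m) : Measurable (fixedPointMap lam0 lam I0 S0 m) := by
  refine Measurable.ite measurableSet_Ici ((measurable_const.mul hlam0).add
    (measurable_const.mul (measurable_intervalIntegral_zero ?_))) measurable_const
  exact ((hlam.comp (measurable_fst.sub measurable_snd)).mul (hm.comp measurable_snd)).mul
    ((measurable_survival hm).comp measurable_snd)

theorem IsRate.kernel_mem_Icc (hlam : IsRate B lam) (hm : IsRate B m) {t s : ℝ}
    (hs : s ∈ Icc 0 t) : lam (t - s) * m s * survival m s ∈ Icc 0 (B * (m s * survival m s)) := by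
  have hlam_s := hlam.2 (t - s) (sub_nonneg.2 hs.2)
  have hms : 0 ≤ m s * survival m s := mul_nonneg (hm.2 s hs.1).1 (survival_pos m s).le
  rw [mul_assoc]
  exact ⟨mul_nonneg hlam_s.1 hms, mul_le_mul_of_nonneg_right hlam_s.2 hms⟩

theorem IsRate.intervalIntegrable_kernel (hlam : IsRate B lam) (hm : IsRate B m) {t : ℝ}
    (ht : 0 ≤ t) :
    IntervalIntegrable (fun s => lam (t - s) * m s * survival m s) volume 0 t := by
  refine intervalIntegrable_of_abs_le (g := fun s => lam (t - s) * m s * survival m s)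
    (C := B * B) (((hlam.1.comp
    (measurable_const.sub measurable_id)).mul hm.1).mul (measurable_survival hm.1)) ht
    fun s hs => ?_
  have hk := hlam.kernel_mem_Icc hm (Ioc_subset_Icc_self hs)
  rw [abs_of_nonneg hk.1]
  exact hk.2.trans (mul_le_mul_of_nonneg_left (hm.mul_survival_le hs.1.le) hm.bound_nonneg)

theorem IsRate.integral_kernel_mem_Icc (hlam : IsRate B lam) (hm : IsRate B m) {t : ℝ}
    (ht : 0 ≤ t) : ∫ s in (0:ℝ)..t, lam (t - s) * m s * survival m s ∈ Icc 0 B := by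
  refine ⟨intervalIntegral.integral_nonneg ht fun s hs => (hlam.kernel_mem_Icc hm hs).1, ?_⟩
  calc ∫ s in (0:ℝ)..t, lam (t - s) * m s * survival m s
      ≤ ∫ s in (0:ℝ)..t, B * (m s * survival m s) :=
        intervalIntegral.integral_mono_on ht (hlam.intervalIntegrable_kernel hm ht)
          ((hm.intervalIntegrable_mul_survival ht).const_mul B)
          fun s hs => (hlam.kernel_mem_Icc hm hs).2
    _ = B * (1 - survival m t) := by
        rw [intervalIntegral.integral_const_mul, hm.integral_mul_survival ht]
    _ ≤ B := mul_le_of_le_one_right hm.bound_nonneg (sub_le_self _ (survival_pos m t).le)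

theorem ModelAssumptions.isRate_fixedPointMap (h : ModelAssumptions B lam0 lam I0 S0)
    (hm : IsRate B m) : IsRate B (fixedPointMap lam0 lam I0 S0 m) := by
  refine ⟨measurable_fixedPointMap h.isRate_lam0.1 h.isRate_lam.1 hm.1, fun t ht => ?_⟩
  have hlam0 := h.isRate_lam0.2 t ht
  have hint := h.isRate_lam.integral_kernel_mem_Icc hm ht
  rw [fixedPointMap_of_nonneg ht]
  constructor
  · exact add_nonneg (mul_nonneg h.I0_nonneg hlam0.1) (mul_nonneg h.S0_nonneg hint.1)
  · calc I0 * lam0 t + S0 * ∫ s in (0:ℝ)..t, lam (t - s) * m s * survival m s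
        ≤ I0 * B + S0 * B :=
          add_le_add (mul_le_mul_of_nonneg_left hlam0.2 h.I0_nonneg)
            (mul_le_mul_of_nonneg_left hint.2 h.S0_nonneg)
      _ ≤ B := by nlinarith [h.add_le_one, hm.bound_nonneg]

theorem IsRate.abs_kernel_sub_le (hlam : IsRate B lam) (hm : IsRate B m) (hm' : IsRate B m')
    {t s : ℝ} (hs : s ∈ Icc 0 t) :
    |lam (t - s) * m s * survival m s - lam (t - s) * m' s * survival m' s|
      ≤ B * (|m s - m' s| + B * ∫ r in (0:ℝ)..t, |m r - m' r|) := by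
  have hlam_s := hlam.2 (t - s) (sub_nonneg.2 hs.2)
  have hmono : ∫ r in (0:ℝ)..s, |m r - m' r| ≤ ∫ r in (0:ℝ)..t, |m r - m' r| :=
    intervalIntegral.integral_mono_interval le_rfl hs.1 hs.2
      (ae_of_all _ fun r => abs_nonneg _)
      ((hm.abs_sub hm').intervalIntegrable le_rfl (hs.1.trans hs.2))
  rw [mul_assoc, mul_assoc, ← mul_sub, abs_mul, abs_of_nonneg hlam_s.1]
  refine mul_le_mul hlam_s.2 ((hm.abs_mul_survival_sub_le hm' hs.1).trans ?_) (abs_nonneg _)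
    hm.bound_nonneg
  gcongr
  exact hm.bound_nonneg

theorem abs_fixedPointMap_sub_le (hlam : IsRate B lam) (hS0 : 0 ≤ S0) (hm : IsRate B m)
    (hm' : IsRate B m') {t T : ℝ} (ht : t ∈ Icc 0 T) :
    |fixedPointMap lam0 lam I0 S0 m t - fixedPointMap lam0 lam I0 S0 m' t|
      ≤ S0 * B * (1 + B * T) * ∫ s in (0:ℝ)..t, |m s - m' s| := by
  set D := ∫ s in (0:ℝ)..t, |m s - m' s|
  have hdiff := (hm.abs_sub hm').intervalIntegrable le_rfl ht.1
  have hkernel : ∫ s in (0:ℝ)..t,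
      |lam (t - s) * m s * survival m s - lam (t - s) * m' s * survival m' s|
        ≤ B * (D + B * D * t) := by
    calc _ ≤ ∫ s in (0:ℝ)..t, B * (|m s - m' s| + B * D) :=
          intervalIntegral.integral_mono_on ht.1 ((hlam.intervalIntegrable_kernel hm ht.1).sub
            (hlam.intervalIntegrable_kernel hm' ht.1)).abs
            ((hdiff.add intervalIntegrable_const).const_mul B)
            fun s hs => hlam.abs_kernel_sub_le hm hm' hs
      _ = B * (D + B * D * t) := by
          rw [intervalIntegral.integral_const_mul, intervalIntegral.integral_add hdiff
            intervalIntegrable_const, intervalIntegral.integral_const, smul_eq_mul]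
          ring
  rw [fixedPointMap_of_nonneg ht.1, fixedPointMap_of_nonneg ht.1, add_sub_add_left_eq_sub,
    ← mul_sub, abs_mul, abs_of_nonneg hS0, ← intervalIntegral.integral_sub
      (hlam.intervalIntegrable_kernel hm ht.1) (hlam.intervalIntegrable_kernel hm' ht.1)]
  have hD : 0 ≤ D := intervalIntegral.integral_nonneg ht.1 fun _ _ => abs_nonneg _
  have hB := hm.bound_nonneg
  calc S0 * |∫ s in (0:ℝ)..t,
        (lam (t - s) * m s * survival m s - lam (t - s) * m' s * survival m' s)|
      ≤ S0 * (B * (D + B * D * t)) := by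
        gcongr
        exact (intervalIntegral.abs_integral_le_integral_abs ht.1).trans hkernel
    _ = S0 * B * (1 + B * t) * D := by ring
    _ ≤ S0 * B * (1 + B * T) * D := by gcongr; exact ht.2

theorem fixedPoint_unique (hlam : IsRate B lam) (hS0 : 0 ≤ S0) (hm : IsRate B m)
    (hm' : IsRate B m') (hfix : ∀ t, 0 ≤ t → fixedPointMap lam0 lam I0 S0 m t = m t)
    (hfix' : ∀ t, 0 ≤ t → fixedPointMap lam0 lam I0 S0 m' t = m' t) {t : ℝ} (ht : 0 ≤ t) :
    m t = m' t := by
  have hB := hm.bound_nonneg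
  refine sub_eq_zero.1 (eq_zero_of_abs_le_integral (u := fun s => m s - m' s)
    (K := S0 * B * (1 + B * t)) (by positivity)
    ((hm.intervalIntegrable le_rfl ht).sub (hm'.intervalIntegrable le_rfl ht))
    (fun s hs => ((hm.abs_sub hm').2 s hs.1).2) (fun s hs => ?_) t ⟨ht, le_rfl⟩)
  rw [← hfix s hs.1, ← hfix' s hs.1]
  exact abs_fixedPointMap_sub_le hlam hS0 hm hm' hs

theorem tendsto_fixedPointMap (hlam : IsRate B lam) (hS0 : 0 ≤ S0)
    {p : ℕ → ℝ → ℝ} (hp : ∀ n, IsRate B (p n)) (hm : IsRate B m) {t : ℝ} (ht : 0 ≤ t)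
    (hlim : ∀ s ∈ Icc 0 t, Tendsto (fun n => p n s) atTop (𝓝 (m s))) :
    Tendsto (fun n => fixedPointMap lam0 lam I0 S0 (p n) t) atTop
      (𝓝 (fixedPointMap lam0 lam I0 S0 m t)) := by
  have hIoc : ∀ s ∈ Ι 0 t, s ∈ Icc 0 t := fun s hs =>
    Ioc_subset_Icc_self (uIoc_of_le ht ▸ hs)
  have hint : Tendsto (fun n => ∫ s in (0:ℝ)..t, |p n s - m s|) atTop (𝓝 0) := by
    simpa using intervalIntegral.tendsto_integral_filter_of_dominated_convergence
      (F := fun n s => |p n s - m s|) (f := 0) (fun _ => B)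
      (Eventually.of_forall fun n => ((hp n).1.sub hm.1).abs.aestronglyMeasurable)
      (Eventually.of_forall fun n => ae_of_all _ fun s hs => by
        rw [Real.norm_eq_abs, abs_abs]
        exact (((hp n).abs_sub hm).2 s (hIoc s hs).1).2)
      intervalIntegrable_const
      (ae_of_all _ fun s hs => by simpa using ((hlim s (hIoc s hs)).sub_const (m s)).abs)
  refine tendsto_iff_norm_sub_tendsto_zero.2 (squeeze_zero (fun _ => norm_nonneg _)
    (fun n => abs_fixedPointMap_sub_le hlam hS0 (hp n) hm ⟨ht, le_rfl⟩) ?_)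
  simpa using hint.const_mul (S0 * B * (1 + B * t))

theorem iterate_fixedPointMap_of_neg (n : ℕ) {t : ℝ} (ht : t < 0) :
    (fixedPointMap lam0 lam I0 S0)^[n] 0 t = 0 := by
  cases n with
  | zero => rfl
  | succ n => rw [iterate_succ_apply', fixedPointMap_of_neg ht]

theorem ModelAssumptions.isRate_iterate (h : ModelAssumptions B lam0 lam I0 S0) (n : ℕ) :
    IsRate B ((fixedPointMap lam0 lam I0 S0)^[n] 0) := by
  induction n with
  | zero => exact ⟨measurable_const, fun _ _ => ⟨le_rfl, h.isRate_lam.bound_nonneg⟩⟩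
  | succ n ih => exact iterate_succ_apply' _ n _ ▸ h.isRate_fixedPointMap ih

theorem ModelAssumptions.abs_iterate_succ_sub_le (h : ModelAssumptions B lam0 lam I0 S0)
    (n : ℕ) {s T : ℝ} (hs : s ∈ Icc 0 T) :
    |(fixedPointMap lam0 lam I0 S0)^[n + 1] 0 s - (fixedPointMap lam0 lam I0 S0)^[n] 0 s|
      ≤ B * (S0 * B * (1 + B * T) * s) ^ n / n.factorial := by
  have hB := h.isRate_lam.bound_nonneg
  have hT : 0 ≤ T := hs.1.trans hs.2
  refine le_pow_div_factorial_of_le_integral (d := fun n s =>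
    |(fixedPointMap lam0 lam I0 S0)^[n + 1] 0 s - (fixedPointMap lam0 lam I0 S0)^[n] 0 s|)
    (by have := h.S0_nonneg; positivity)
    (fun n => ((h.isRate_iterate (n + 1)).abs_sub (h.isRate_iterate n)).intervalIntegrable
      le_rfl hT)
    (fun s hs => (((h.isRate_iterate 1).abs_sub (h.isRate_iterate 0)).2 s hs.1).2)
    (fun n s hs => ?_) n s hs
  have := abs_fixedPointMap_sub_le (lam0 := lam0) (I0 := I0) h.isRate_lam h.S0_nonneg
    (h.isRate_iterate (n + 1)) (h.isRate_iterate n) hs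
  simp only [iterate_succ_apply'] at this ⊢
  exact this

theorem ModelAssumptions.exists_isRate_fixedPoint (h : ModelAssumptions B lam0 lam I0 S0) :
    ∃ m, IsRate B m ∧ ∀ t, 0 ≤ t → fixedPointMap lam0 lam I0 S0 m t = m t := by
  have hcauchy : ∀ t, CauchySeq fun n => (fixedPointMap lam0 lam I0 S0)^[n] 0 t := by
    intro t
    rcases lt_or_ge t 0 with ht | ht
    · simpa only [iterate_fixedPointMap_of_neg _ ht] using cauchySeq_const (β := ℕ) (0 : ℝ)
    · refine cauchySeq_of_dist_le_of_summable _ (fun n => ?_)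
        ((Real.summable_pow_div_factorial (S0 * B * (1 + B * t) * t)).mul_left B)
      rw [dist_comm, Real.dist_eq, ← mul_div_assoc]
      exact h.abs_iterate_succ_sub_le n ⟨ht, le_rfl⟩
  choose m hm using fun t : ℝ => cauchySeq_tendsto_of_complete (hcauchy t)
  have hmRate : IsRate B m :=
    ⟨measurable_of_tendsto_metrizable (fun n => (h.isRate_iterate n).1) (tendsto_pi_nhds.2 hm),
      fun t ht => isClosed_Icc.mem_of_tendsto (hm t)
        (Eventually.of_forall fun n => (h.isRate_iterate n).2 t ht)⟩
  refine ⟨m, hmRate, fun t ht => tendsto_nhds_unique (tendsto_fixedPointMap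
    h.isRate_lam h.S0_nonneg h.isRate_iterate hmRate ht fun s _ => hm s) ?_⟩
  simpa only [comp_def, iterate_succ_apply'] using (hm t).comp (tendsto_add_atTop_nat 1)

end FixedPointMap

end HomogeneousLimit

open HomogeneousLimit

section HomSol

variable {B : ℝ} {lam0 lam : ℝ → ℝ} {I0 S0 : ℝ} {S F : ℝ → ℝ}

theorem IsHomSol.intervalIntegrable_mul (hSF : IsHomSol lam0 lam S0 I0 S F) {t : ℝ}
    (ht : 0 ≤ t) : IntervalIntegrable (fun s => S s * F s) volume 0 t := by
  obtain ⟨hS, hF, hS_nonneg, hF_nonneg, hbdd, -, -⟩ := hSF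
  obtain ⟨C, hC⟩ := hbdd t
  refine intervalIntegrable_of_abs_le (g := fun s => S s * F s) (C := C * C) (hS.mul hF) ht
    fun s hs => ?_
  have hs' : s ∈ Icc 0 t := Ioc_subset_Icc_self hs
  rw [abs_of_nonneg (mul_nonneg (hS_nonneg s hs'.1) (hF_nonneg s hs'.1))]
  exact mul_le_mul (hC s hs').1 (hC s hs').2 (hF_nonneg s hs'.1)
    ((hS_nonneg s hs'.1).trans (hC s hs').1)

theorem IsHomSol.le_bound (hSF : IsHomSol lam0 lam S0 I0 S F)
    (h : ModelAssumptions B lam0 lam I0 S0) {t : ℝ} (ht : 0 ≤ t) : F t ≤ B := by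
  have hint := hSF.intervalIntegrable_mul ht
  obtain ⟨-, -, hS_nonneg, hF_nonneg, -, hS_eq, hF_eq⟩ := hSF
  have hkernel : ∫ s in (0:ℝ)..t, lam (t - s) * S s * F s ≤ B * (S0 - S t) := by
    refine (Real.le_norm_self _).trans ((intervalIntegral.norm_integral_le_of_norm_le ht
      (ae_of_all _ fun s hs => ?_) (hint.const_mul B)).trans_eq ?_)
    have hlam_s := h.isRate_lam.2 (t - s) (sub_nonneg.2 hs.2)
    have hSF_s := mul_nonneg (hS_nonneg s hs.1.le) (hF_nonneg s hs.1.le)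
    rw [Real.norm_eq_abs, mul_assoc, abs_of_nonneg (mul_nonneg hlam_s.1 hSF_s)]
    · exact mul_le_mul_of_nonneg_right hlam_s.2 hSF_s
    · rw [intervalIntegral.integral_const_mul, hS_eq t ht, sub_sub_cancel]
  have hB := h.isRate_lam.bound_nonneg
  rw [hF_eq t ht]
  nlinarith [mul_le_mul_of_nonneg_left (h.isRate_lam0.2 t ht).2 h.I0_nonneg,
    mul_nonneg hB (hS_nonneg t ht), mul_le_mul_of_nonneg_left h.add_le_one hB]

theorem IsHomSol.isRate (hSF : IsHomSol lam0 lam S0 I0 S F)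
    (h : ModelAssumptions B lam0 lam I0 S0) : IsRate B F :=
  have ⟨_, hF, _, hF_nonneg, _⟩ := hSF
  ⟨hF, fun _ ht => ⟨hF_nonneg _ ht, hSF.le_bound h ht⟩⟩

theorem IsHomSol.sub_mul_survival_eq (hSF : IsHomSol lam0 lam S0 I0 S F) (hF : IsRate B F)
    {t : ℝ} (ht : 0 ≤ t) : S t - S0 * survival F t
      = -∫ s in (0:ℝ)..t, (S s - S0 * survival F s) * F s := by
  have hint := hSF.intervalIntegrable_mul ht
  obtain ⟨-, -, -, -, -, hS_eq, -⟩ := hSF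
  have hsurv : survival F t = 1 - ∫ s in (0:ℝ)..t, F s * survival F s := by
    rw [hF.integral_mul_survival ht, sub_sub_cancel]
  rw [hS_eq t ht, hsurv,
    intervalIntegral.integral_congr (f := fun s => (S s - S0 * survival F s) * F s)
      (g := fun s => S s * F s - S0 * (F s * survival F s))
      fun s _ => by ring,
    intervalIntegral.integral_sub hint ((hF.intervalIntegrable_mul_survival ht).const_mul S0),
    intervalIntegral.integral_const_mul]
  ring

theorem IsHomSol.eq_mul_survival (hSF : IsHomSol lam0 lam S0 I0 S F)
    (h : ModelAssumptions B lam0 lam I0 S0) {t : ℝ} (ht : 0 ≤ t) :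
    S t = S0 * survival F t := by
  have hF := hSF.isRate h
  have hu_eq := fun s (hs : s ∈ Icc 0 t) => hSF.sub_mul_survival_eq hF hs.1
  obtain ⟨hS, -, hS_nonneg, -, hbdd, -, -⟩ := hSF
  obtain ⟨C, hC⟩ := hbdd t
  have hu_bdd : ∀ s ∈ Icc 0 t, |S s - S0 * survival F s| ≤ C + S0 := fun s hs => by
    have hS_s := hS_nonneg s hs.1
    have := mul_le_of_le_one_right h.S0_nonneg (hF.survival_le_one hs.1)
    have := mul_nonneg h.S0_nonneg (survival_pos F s).le
    exact abs_sub_le_iff.2 ⟨by linarith [(hC s hs).1], by linarith [(hC s hs).1]⟩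
  have hu_int : IntervalIntegrable (fun s => S s - S0 * survival F s) volume 0 t :=
    intervalIntegrable_of_abs_le (hS.sub (measurable_const.mul (measurable_survival hF.1)))
      ht fun s hs => hu_bdd s (Ioc_subset_Icc_self hs)
  refine sub_eq_zero.1 (eq_zero_of_abs_le_integral hF.bound_nonneg hu_int hu_bdd
    (fun s hs => ?_) t ⟨ht, le_rfl⟩)
  rw [hu_eq s hs, abs_neg, ← Real.norm_eq_abs,
    ← intervalIntegral.integral_const_mul]
  refine intervalIntegral.norm_integral_le_of_norm_le hs.1 (ae_of_all _ fun r hr => ?_)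
    ((hu_int.mono_set (uIcc_subset_uIcc left_mem_uIcc (mem_uIcc_of_le hs.1 hs.2))).abs.const_mul _)
  rw [Real.norm_eq_abs, abs_mul, abs_of_nonneg (hF.2 r hr.1.le).1, mul_comm]
  exact mul_le_mul_of_nonneg_right (hF.2 r hr.1.le).2 (abs_nonneg _)

theorem IsHomSol.fixedPoint (hSF : IsHomSol lam0 lam S0 I0 S F)
    (h : ModelAssumptions B lam0 lam I0 S0) {t : ℝ} (ht : 0 ≤ t) :
    fixedPointMap lam0 lam I0 S0 F t = F t := by
  have hS_eq := fun s (hs : 0 ≤ s) => hSF.eq_mul_survival h hs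
  obtain ⟨-, -, -, -, -, -, hF_eq⟩ := hSF
  rw [fixedPointMap_of_nonneg ht, hF_eq t ht, ← intervalIntegral.integral_const_mul]
  congr 1
  refine intervalIntegral.integral_congr fun s hs => ?_
  rw [uIcc_of_le ht] at hs
  simp only [hS_eq s hs.1]
  ring

end HomSol

theorem fixed_point_exists_unique_eq_F_general
    (lamStar : ℝ)
    (lam0 lam : ℝ → ℝ) (hlam0_meas : Measurable lam0) (hlam_meas : Measurable lam)
    (hlam0_mem : ∀ t : ℝ, 0 ≤ t → lam0 t ∈ Set.Icc (0:ℝ) lamStar)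
    (hlam_mem : ∀ t : ℝ, 0 ≤ t → lam t ∈ Set.Icc (0:ℝ) lamStar)
    (I0 S0 : ℝ) (hI0 : I0 ∈ Set.Ioo (0:ℝ) 1) (hS0 : S0 ∈ Set.Ioo (0:ℝ) 1)
    (hsum : I0 + S0 ≤ 1) :
    ∃ m : ℝ → ℝ,
      (Measurable m ∧ (∀ t : ℝ, 0 ≤ t → m t ∈ Set.Icc (0:ℝ) lamStar) ∧
        (∀ t : ℝ, 0 ≤ t →
          m t = I0 * lam0 t + S0 * ∫ s in (0:ℝ)..t,
            lam (t - s) * m s * Real.exp (-(∫ r in (0:ℝ)..s, m r)))) ∧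
      (∀ m' : ℝ → ℝ, Measurable m' →
        (∀ t : ℝ, 0 ≤ t → m' t ∈ Set.Icc (0:ℝ) lamStar) →
        (∀ t : ℝ, 0 ≤ t →
          m' t = I0 * lam0 t + S0 * ∫ s in (0:ℝ)..t,
            lam (t - s) * m' s * Real.exp (-(∫ r in (0:ℝ)..s, m' r))) →
        ∀ t : ℝ, 0 ≤ t → m' t = m t) ∧
      (∀ S F : ℝ → ℝ, IsHomSol lam0 lam S0 I0 S F → ∀ t : ℝ, 0 ≤ t → m t = F t) := by
  have h : ModelAssumptions lamStar lam0 lam I0 S0 :=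
    ⟨⟨hlam0_meas, hlam0_mem⟩, ⟨hlam_meas, hlam_mem⟩, hI0.1.le, hS0.1.le, hsum⟩
  obtain ⟨m, hm, hfix⟩ := h.exists_isRate_fixedPoint
  have huniq : ∀ m', IsRate lamStar m' →
      (∀ t, 0 ≤ t → fixedPointMap lam0 lam I0 S0 m' t = m' t) → ∀ t, 0 ≤ t → m' t = m t :=
    fun m' hm' hfix' t ht => fixedPoint_unique h.isRate_lam h.S0_nonneg hm' hm hfix' hfix ht
  refine ⟨m, ⟨hm.1, hm.2, fun t ht => (hfix t ht).symm.trans (fixedPointMap_of_nonneg ht)⟩,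
    fun m' hm'_meas hm'_mem hm'_eq => huniq m' ⟨hm'_meas, hm'_mem⟩
      fun t ht => (fixedPointMap_of_nonneg ht).trans (hm'_eq t ht).symm,
    fun S F hSF t ht => (huniq F (hSF.isRate h) (fun _ => hSF.fixedPoint h) t ht).symm⟩

/-- There is exactly one Borel measurable `m : [0,∞) → [0,λ*]` with
`m(t) = Ī(0)λ̄⁰(t) + S̄(0)∫₀ᵗ λ̄(t−s) m(s) exp(−∫₀ˢ m(r)dr) ds` for all `t ≥ 0`,
and this fixed point equals `F̄`, the second component of the (unique) solution
of the homogeneous limit system. -/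
theorem fixed_point_exists_unique_eq_F
    (lamStar : ℝ) (hlamStar : 0 < lamStar)
    (lam0 lam : ℝ → ℝ) (hlam0_meas : Measurable lam0) (hlam_meas : Measurable lam)
    (hlam0_mem : ∀ t : ℝ, 0 ≤ t → lam0 t ∈ Set.Icc (0:ℝ) lamStar)
    (hlam_mem : ∀ t : ℝ, 0 ≤ t → lam t ∈ Set.Icc (0:ℝ) lamStar)
    (I0 S0 : ℝ) (hI0 : I0 ∈ Set.Ioo (0:ℝ) 1) (hS0 : S0 ∈ Set.Ioo (0:ℝ) 1)
    (hsum : I0 + S0 ≤ 1) :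
    ∃ m : ℝ → ℝ,
      (Measurable m ∧ (∀ t : ℝ, 0 ≤ t → m t ∈ Set.Icc (0:ℝ) lamStar) ∧
        (∀ t : ℝ, 0 ≤ t →
          m t = I0 * lam0 t + S0 * ∫ s in (0:ℝ)..t,
            lam (t - s) * m s * Real.exp (-(∫ r in (0:ℝ)..s, m r)))) ∧
      (∀ m' : ℝ → ℝ, Measurable m' →
        (∀ t : ℝ, 0 ≤ t → m' t ∈ Set.Icc (0:ℝ) lamStar) →
        (∀ t : ℝ, 0 ≤ t →
          m' t = I0 * lam0 t + S0 * ∫ s in (0:ℝ)..t,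
            lam (t - s) * m' s * Real.exp (-(∫ r in (0:ℝ)..s, m' r))) →
        ∀ t : ℝ, 0 ≤ t → m' t = m t) ∧
      (∀ S F : ℝ → ℝ, IsHomSol lam0 lam S0 I0 S F → ∀ t : ℝ, 0 ≤ t → m t = F t) :=
  fixed_point_exists_unique_eq_F_general lamStar lam0 lam hlam0_meas hlam_meas hlam0_mem hlam_mem I0
    S0 hI0 hS0 hsum
end

section
/- Any solution of the multipatch–multigroup limit system satisfies the a priori bound ∑_{k=1}^K ∑_{ℓ=1}^L F̄_k^ℓ(t) ≤ λ* L K e^{λ* β* L K t} for all t ≥ 0. -/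
open MeasureTheory

/-- The data of the multipatch–multigroup limit system: `K` groups, `L` patches,
a parameter `γ ∈ [0,1]`, infectivity profiles `λ̄_k, λ̄⁰_k` bounded by `λ*`,
contact rates `β_{k,k'}^{ℓ,ℓ'}` bounded by `β*`, transition functions
`q_k^{ℓ',ℓ}(s,t) ∈ [0,1]`, conservative migration rate matrices
`ν_{S,k}, ν_{I,k}, ν_{R,k}`, infectious-period distributions `F_k, F⁰_k`
(probability measures on `[0,∞)`), and nonnegative initial conditions with
`B̄_k^ℓ(0) > 0` and total mass at most `1`. -/
structure MPMGData (K L : ℕ) where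
  gam : ℝ
  gam_nonneg : 0 ≤ gam
  gam_le_one : gam ≤ 1
  lamStar : ℝ
  lamStar_pos : 0 < lamStar
  betaStar : ℝ
  betaStar_pos : 0 < betaStar
  lam : Fin K → ℝ → ℝ
  lam0 : Fin K → ℝ → ℝ
  lam_meas : ∀ k, Measurable (lam k)
  lam0_meas : ∀ k, Measurable (lam0 k)
  lam_mem : ∀ k (t : ℝ), lam k t ∈ Set.Icc 0 lamStar
  lam0_mem : ∀ k (t : ℝ), lam0 k t ∈ Set.Icc 0 lamStar
  lam_neg : ∀ k (t : ℝ), t < 0 → lam k t = 0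
  lam0_neg : ∀ k (t : ℝ), t < 0 → lam0 k t = 0
  beta : Fin K → Fin K → Fin L → Fin L → ℝ → ℝ
  beta_meas : ∀ k k' l l', Measurable (beta k k' l l')
  beta_mem : ∀ k k' l l' (t : ℝ), 0 ≤ t → beta k k' l l' t ∈ Set.Icc 0 betaStar
  q : Fin K → Fin L → Fin L → ℝ → ℝ → ℝ
  q_meas : ∀ k l' l, Measurable (Function.uncurry (q k l' l))
  q_mem : ∀ k l' l (s t : ℝ), 0 ≤ s → s ≤ t → q k l' l s t ∈ Set.Icc (0:ℝ) 1
  nuS : Fin K → Fin L → Fin L → ℝ → ℝ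
  nuI : Fin K → Fin L → Fin L → ℝ → ℝ
  nuR : Fin K → Fin L → Fin L → ℝ → ℝ
  nuS_meas : ∀ k l l', Measurable (nuS k l l')
  nuI_meas : ∀ k l l', Measurable (nuI k l l')
  nuR_meas : ∀ k l l', Measurable (nuR k l l')
  nuS_bdd : ∀ k l l' (T : ℝ), ∃ C : ℝ, ∀ t ∈ Set.Icc (0:ℝ) T, |nuS k l l' t| ≤ C
  nuI_bdd : ∀ k l l' (T : ℝ), ∃ C : ℝ, ∀ t ∈ Set.Icc (0:ℝ) T, |nuI k l l' t| ≤ C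
  nuR_bdd : ∀ k l l' (T : ℝ), ∃ C : ℝ, ∀ t ∈ Set.Icc (0:ℝ) T, |nuR k l l' t| ≤ C
  nuS_nonneg : ∀ k l l' (t : ℝ), 0 ≤ t → l' ≠ l → 0 ≤ nuS k l l' t
  nuI_nonneg : ∀ k l l' (t : ℝ), 0 ≤ t → l' ≠ l → 0 ≤ nuI k l l' t
  nuR_nonneg : ∀ k l l' (t : ℝ), 0 ≤ t → l' ≠ l → 0 ≤ nuR k l l' t
  nuS_diag : ∀ k l (t : ℝ), 0 ≤ t →
    nuS k l l t = -∑ l' ∈ Finset.univ.filter (fun l' => l' ≠ l), nuS k l l' t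
  nuI_diag : ∀ k l (t : ℝ), 0 ≤ t →
    nuI k l l t = -∑ l' ∈ Finset.univ.filter (fun l' => l' ≠ l), nuI k l l' t
  nuR_diag : ∀ k l (t : ℝ), 0 ≤ t →
    nuR k l l t = -∑ l' ∈ Finset.univ.filter (fun l' => l' ≠ l), nuR k l l' t
  Fdist : Fin K → Measure ℝ
  F0dist : Fin K → Measure ℝ
  Fdist_prob : ∀ k, IsProbabilityMeasure (Fdist k)
  F0dist_prob : ∀ k, IsProbabilityMeasure (F0dist k)
  Fdist_supp : ∀ k, Fdist k (Set.Iio 0) = 0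
  F0dist_supp : ∀ k, F0dist k (Set.Iio 0) = 0
  S0 : Fin K → Fin L → ℝ
  I0 : Fin K → Fin L → ℝ
  R0 : Fin K → Fin L → ℝ
  S0_nonneg : ∀ k l, 0 ≤ S0 k l
  I0_nonneg : ∀ k l, 0 ≤ I0 k l
  R0_nonneg : ∀ k l, 0 ≤ R0 k l
  B0_pos : ∀ k l, 0 < S0 k l + I0 k l + R0 k l
  B0_sum_le : ∑ k, ∑ l, (S0 k l + I0 k l + R0 k l) ≤ 1

/-- The force of infection `Γ̄_k^ℓ(t) = (B̄_k^ℓ(t))^{−γ} ∑_{k',ℓ'} β_{k,k'}^{ℓ,ℓ'}(t) F̄_{k'}^{ℓ'}(t)`,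
where `B̄_k^ℓ = S̄_k^ℓ + Ī_k^ℓ + R̄_k^ℓ`. The power is the real power. -/
noncomputable def MPMGData.Gam {K L : ℕ} (D : MPMGData K L)
    (S Fb I R : Fin K → Fin L → ℝ → ℝ) (k : Fin K) (l : Fin L) (t : ℝ) : ℝ :=
  (S k l t + I k l t + R k l t) ^ (-D.gam) *
    ∑ k', ∑ l', D.beta k k' l l' t * Fb k' l' t

/-- A solution of the multipatch–multigroup limit system: Borel measurable,
locally bounded, nonnegative functions `(S̄_k^ℓ, F̄_k^ℓ, Ī_k^ℓ, R̄_k^ℓ)` with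
`B̄_k^ℓ > 0`, satisfying equations (i)–(iv) for all `t ≥ 0` and all `k, ℓ`. -/
structure IsMPMGSol {K L : ℕ} (D : MPMGData K L)
    (S Fb I R : Fin K → Fin L → ℝ → ℝ) : Prop where
  S_meas : ∀ k l, Measurable (S k l)
  Fb_meas : ∀ k l, Measurable (Fb k l)
  I_meas : ∀ k l, Measurable (I k l)
  R_meas : ∀ k l, Measurable (R k l)
  locBdd : ∀ T : ℝ, ∃ C : ℝ, ∀ k l, ∀ t ∈ Set.Icc (0:ℝ) T,
    S k l t ≤ C ∧ Fb k l t ≤ C ∧ I k l t ≤ C ∧ R k l t ≤ C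
  S_nonneg : ∀ k l (t : ℝ), 0 ≤ t → 0 ≤ S k l t
  Fb_nonneg : ∀ k l (t : ℝ), 0 ≤ t → 0 ≤ Fb k l t
  I_nonneg : ∀ k l (t : ℝ), 0 ≤ t → 0 ≤ I k l t
  R_nonneg : ∀ k l (t : ℝ), 0 ≤ t → 0 ≤ R k l t
  B_pos : ∀ k l (t : ℝ), 0 ≤ t → 0 < S k l t + I k l t + R k l t
  eqS : ∀ k l (t : ℝ), 0 ≤ t →
    S k l t = D.S0 k l
      - (∫ s in (0:ℝ)..t, S k l s * D.Gam S Fb I R k l s)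
      + ∑ l', ∫ s in (0:ℝ)..t, D.nuS k l' l s * S k l' s
  eqF : ∀ k l (t : ℝ), 0 ≤ t →
    Fb k l t = D.lam0 k t * (∑ l', D.I0 k l' * D.q k l' l 0 t)
      + ∑ l', ∫ s in (0:ℝ)..t,
          D.lam k (t - s) * S k l' s * D.Gam S Fb I R k l' s * D.q k l' l s t
  eqI : ∀ k l (t : ℝ), 0 ≤ t →
    I k l t = D.I0 k l
      - (∑ l', D.I0 k l' * ∫ s in Set.Ioc (0:ℝ) t, D.q k l' l 0 s ∂(D.F0dist k))
      + (∫ s in (0:ℝ)..t, S k l s * D.Gam S Fb I R k l s)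
      - (∑ l', ∫ s in (0:ℝ)..t,
          (∫ u in Set.Ioc (0:ℝ) (t - s), D.q k l' l s (s + u) ∂(D.Fdist k))
            * (S k l' s * D.Gam S Fb I R k l' s))
      + ∑ l', ∫ s in (0:ℝ)..t, D.nuI k l' l s * I k l' s
  eqR : ∀ k l (t : ℝ), 0 ≤ t →
    R k l t = D.R0 k l
      + (∑ l', D.I0 k l' * ∫ s in Set.Ioc (0:ℝ) t, D.q k l' l 0 s ∂(D.F0dist k))
      + (∑ l', ∫ s in (0:ℝ)..t,
          (∫ u in Set.Ioc (0:ℝ) (t - s), D.q k l' l s (s + u) ∂(D.Fdist k))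
            * (S k l' s * D.Gam S Fb I R k l' s))
      + ∑ l', ∫ s in (0:ℝ)..t, D.nuR k l' l s * R k l' s

/-!
Summing equation (i) over the patches, the migration terms cancel because every migration matrix
has zero row sums, so the cumulative number of new infections in group `k` up to time `t` is at
most the initial number of susceptibles of that group. As `λ̄_k, λ̄⁰_k ≤ λ*` and `q ≤ 1`,
equation (ii) then bounds each `F̄_k^ℓ(t)` by `λ*` times the initial mass of group `k`, which is at
most `1`; so in fact `∑ F̄_k^ℓ(t) ≤ λ* L K` and the exponential factor is not needed.
-/

open Set

lemma intervalIntegrable_of_abs_le {f : ℝ → ℝ} {a b C : ℝ} (hab : a ≤ b)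
    (hf : AEStronglyMeasurable f volume) (h : ∀ x ∈ Icc a b, |f x| ≤ C) :
    IntervalIntegrable f volume a b :=
  (intervalIntegrable_iff_integrableOn_Icc_of_le hab).2 <|
    Measure.integrableOn_of_bounded measure_Icc_lt_top.ne hf
      (ae_restrict_of_forall_mem measurableSet_Icc h)

lemma intervalIntegral_mul_le_const_mul {f g : ℝ → ℝ} {a b c : ℝ} (hab : a ≤ b)
    (hf : IntervalIntegrable f volume a b) (hf0 : ∀ x ∈ Icc a b, 0 ≤ f x)
    (hg : ∀ x ∈ Icc a b, g x ∈ Icc 0 c) :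
    ∫ x in a..b, g x * f x ≤ c * ∫ x in a..b, f x := by
  rw [intervalIntegral.integral_of_le hab, intervalIntegral.integral_of_le hab,
    ← integral_const_mul]
  have hIcc : ∀ᵐ x ∂volume.restrict (Ioc a b), x ∈ Icc a b :=
    ae_restrict_of_forall_mem measurableSet_Ioc fun x hx => Ioc_subset_Icc_self hx
  refine integral_mono_of_nonneg ?_ (hf.1.const_mul c) ?_
  · filter_upwards [hIcc] with x hx using mul_nonneg (hg x hx).1 (hf0 x hx)
  · filter_upwards [hIcc] with x hx using mul_le_mul_of_nonneg_right (hg x hx).2 (hf0 x hx)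

lemma Real.rpow_le_one_add_self {x p : ℝ} (hx : 0 ≤ x) (hp0 : 0 ≤ p) (hp1 : p ≤ 1) :
    x ^ p ≤ 1 + x := by
  rcases le_or_gt x 1 with h | h
  · linarith [Real.rpow_le_one hx h hp0]
  · linarith [Real.rpow_le_self_of_one_le h.le hp1]

lemma Real.mul_rpow_neg_le_one_add {x y γ : ℝ} (hy : 0 < y) (hxy : x ≤ y) (hγ0 : 0 ≤ γ)
    (hγ1 : γ ≤ 1) : x * y ^ (-γ) ≤ 1 + y :=
  calc x * y ^ (-γ) ≤ y * y ^ (-γ) := mul_le_mul_of_nonneg_right hxy (Real.rpow_nonneg hy.le _)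
    _ = y ^ (1 - γ) := by rw [sub_eq_add_neg, Real.rpow_add hy, Real.rpow_one]
    _ ≤ 1 + y := Real.rpow_le_one_add_self hy.le (by linarith) (by linarith)

namespace MPMGData

variable {K L : ℕ} (D : MPMGData K L)

lemma sum_nuS_eq_zero (k : Fin K) (l : Fin L) {t : ℝ} (ht : 0 ≤ t) :
    ∑ l', D.nuS k l l' t = 0 := by
  have hdiag := D.nuS_diag k l t ht
  rw [Finset.filter_ne'] at hdiag
  rw [← Finset.add_sum_erase _ _ (Finset.mem_univ l), hdiag, neg_add_cancel]

lemma sum_I0_add_sum_S0_le_one (k : Fin K) : ∑ l, D.I0 k l + ∑ l, D.S0 k l ≤ 1 :=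
  calc ∑ l, D.I0 k l + ∑ l, D.S0 k l ≤ ∑ l, (D.S0 k l + D.I0 k l + D.R0 k l) := by
        rw [← Finset.sum_add_distrib]
        exact Finset.sum_le_sum fun l _ => by linarith [D.R0_nonneg k l]
    _ ≤ ∑ k, ∑ l, (D.S0 k l + D.I0 k l + D.R0 k l) :=
        Finset.single_le_sum (f := fun k => ∑ l, (D.S0 k l + D.I0 k l + D.R0 k l))
          (fun k _ => Finset.sum_nonneg fun l _ => (D.B0_pos k l).le) (Finset.mem_univ k)
    _ ≤ 1 := D.B0_sum_le

end MPMGData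

namespace IsMPMGSol

variable {K L : ℕ} {D : MPMGData K L} {S Fb I R : Fin K → Fin L → ℝ → ℝ}

lemma Gam_nonneg (hsol : IsMPMGSol D S Fb I R) (k : Fin K) (l : Fin L) {s : ℝ} (hs : 0 ≤ s) :
    0 ≤ D.Gam S Fb I R k l s :=
  mul_nonneg (Real.rpow_nonneg (hsol.B_pos k l s hs).le _) <|
    Finset.sum_nonneg fun k' _ => Finset.sum_nonneg fun l' _ =>
      mul_nonneg (D.beta_mem k k' l l' s hs).1 (hsol.Fb_nonneg k' l' s hs)

lemma measurable_Gam (hsol : IsMPMGSol D S Fb I R) (k : Fin K) (l : Fin L) :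
    Measurable (D.Gam S Fb I R k l) := by
  have := hsol.S_meas k l
  have := hsol.I_meas k l
  have := hsol.R_meas k l
  have := hsol.Fb_meas
  have := D.beta_meas k
  unfold MPMGData.Gam
  fun_prop

lemma S_mul_Gam_le (hsol : IsMPMGSol D S Fb I R) {t C : ℝ}
    (hC : ∀ k l, ∀ s ∈ Icc (0:ℝ) t, S k l s ≤ C ∧ Fb k l s ≤ C ∧ I k l s ≤ C ∧ R k l s ≤ C)
    (k : Fin K) (l : Fin L) {s : ℝ} (hs : s ∈ Icc 0 t) :
    S k l s * D.Gam S Fb I R k l s ≤ (1 + 3 * C) * (K * L * (D.betaStar * C)) := by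
  obtain ⟨hS, -, hI, hR⟩ := hC k l s hs
  have hI0 := hsol.I_nonneg k l s hs.1
  have hR0 := hsol.R_nonneg k l s hs.1
  have hSB : S k l s * (S k l s + I k l s + R k l s) ^ (-D.gam) ≤ 1 + 3 * C :=
    (Real.mul_rpow_neg_le_one_add (hsol.B_pos k l s hs.1) (by linarith) D.gam_nonneg
      D.gam_le_one).trans (by linarith)
  have hforce : ∑ k', ∑ l', D.beta k k' l l' s * Fb k' l' s ≤ K * L * (D.betaStar * C) := by
    calc ∑ k', ∑ l', D.beta k k' l l' s * Fb k' l' s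
        ≤ ∑ _k' : Fin K, ∑ _l' : Fin L, D.betaStar * C :=
          Finset.sum_le_sum fun k' _ => Finset.sum_le_sum fun l' _ =>
            mul_le_mul (D.beta_mem k k' l l' s hs.1).2 (hC k' l' s hs).2.1
              (hsol.Fb_nonneg k' l' s hs.1) D.betaStar_pos.le
      _ = K * L * (D.betaStar * C) := by simp [mul_assoc]
  rw [MPMGData.Gam, ← mul_assoc]
  exact mul_le_mul hSB hforce (Finset.sum_nonneg fun k' _ => Finset.sum_nonneg fun l' _ =>
    mul_nonneg (D.beta_mem k k' l l' s hs.1).1 (hsol.Fb_nonneg k' l' s hs.1))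
    (by linarith [hsol.S_nonneg k l s hs.1])

lemma intervalIntegrable_S_mul_Gam (hsol : IsMPMGSol D S Fb I R) (k : Fin K) (l : Fin L)
    {t : ℝ} (ht : 0 ≤ t) :
    IntervalIntegrable (fun s => S k l s * D.Gam S Fb I R k l s) volume 0 t := by
  obtain ⟨C, hC⟩ := hsol.locBdd t
  refine intervalIntegrable_of_abs_le (C := (1 + 3 * C) * (K * L * (D.betaStar * C))) ht
    ((hsol.S_meas k l).mul (hsol.measurable_Gam k l)).aestronglyMeasurable fun s hs => ?_
  rw [abs_of_nonneg (mul_nonneg (hsol.S_nonneg k l s hs.1) (hsol.Gam_nonneg k l hs.1))]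
  exact hsol.S_mul_Gam_le hC k l hs

lemma intervalIntegrable_nuS_mul_S (hsol : IsMPMGSol D S Fb I R) (k : Fin K) (l' l : Fin L)
    {t : ℝ} (ht : 0 ≤ t) :
    IntervalIntegrable (fun s => D.nuS k l' l s * S k l' s) volume 0 t := by
  obtain ⟨C, hC⟩ := hsol.locBdd t
  obtain ⟨Cν, hCν⟩ := D.nuS_bdd k l' l t
  refine intervalIntegrable_of_abs_le (C := Cν * C) ht
    ((D.nuS_meas k l' l).mul (hsol.S_meas k l')).aestronglyMeasurable fun s hs => ?_
  rw [abs_mul, abs_of_nonneg (hsol.S_nonneg k l' s hs.1)]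
  exact mul_le_mul (hCν s hs) (hC k l' s hs).1 (hsol.S_nonneg k l' s hs.1)
    ((abs_nonneg _).trans (hCν s hs))

lemma sum_integral_nuS_mul_S_eq_zero (hsol : IsMPMGSol D S Fb I R) (k : Fin K) {t : ℝ}
    (ht : 0 ≤ t) : ∑ l, ∑ l', ∫ s in (0:ℝ)..t, D.nuS k l' l s * S k l' s = 0 := by
  rw [Finset.sum_comm]
  refine Finset.sum_eq_zero fun l' _ => ?_
  rw [← intervalIntegral.integral_finsetSum fun l _ => hsol.intervalIntegrable_nuS_mul_S k l' l ht]
  refine (intervalIntegral.integral_congr fun s hs => ?_).trans intervalIntegral.integral_zero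
  rw [uIcc_of_le ht] at hs
  simp only [← Finset.sum_mul, D.sum_nuS_eq_zero k l' hs.1, zero_mul]

lemma sum_integral_S_mul_Gam_le (hsol : IsMPMGSol D S Fb I R) (k : Fin K) {t : ℝ}
    (ht : 0 ≤ t) : ∑ l, ∫ s in (0:ℝ)..t, S k l s * D.Gam S Fb I R k l s ≤ ∑ l, D.S0 k l := by
  have hS := fun l => hsol.eqS k l t ht
  have hmig := hsol.sum_integral_nuS_mul_S_eq_zero k ht
  have hSt : 0 ≤ ∑ l, S k l t := Finset.sum_nonneg fun l _ => hsol.S_nonneg k l t ht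
  calc ∑ l, ∫ s in (0:ℝ)..t, S k l s * D.Gam S Fb I R k l s
      = ∑ l, (D.S0 k l - S k l t + ∑ l', ∫ s in (0:ℝ)..t, D.nuS k l' l s * S k l' s) :=
        Finset.sum_congr rfl fun l _ => by linarith [hS l]
    _ = ∑ l, D.S0 k l - ∑ l, S k l t := by
        rw [Finset.sum_add_distrib, hmig, Finset.sum_sub_distrib, add_zero]
    _ ≤ ∑ l, D.S0 k l := by linarith

lemma Fb_le (hsol : IsMPMGSol D S Fb I R) (k : Fin K) (l : Fin L) {t : ℝ} (ht : 0 ≤ t) :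
    Fb k l t ≤ D.lamStar * (∑ l', D.I0 k l' + ∑ l', D.S0 k l') := by
  have hinitial : D.lam0 k t * (∑ l', D.I0 k l' * D.q k l' l 0 t)
      ≤ D.lamStar * ∑ l', D.I0 k l' :=
    mul_le_mul (D.lam0_mem k t).2
      (Finset.sum_le_sum fun l' _ => mul_le_of_le_one_right (D.I0_nonneg k l')
        (D.q_mem k l' l 0 t le_rfl ht).2)
      (Finset.sum_nonneg fun l' _ =>
        mul_nonneg (D.I0_nonneg k l') (D.q_mem k l' l 0 t le_rfl ht).1)
      D.lamStar_pos.le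
  have hnew : ∀ l', ∫ s in (0:ℝ)..t,
        D.lam k (t - s) * S k l' s * D.Gam S Fb I R k l' s * D.q k l' l s t
      ≤ D.lamStar * ∫ s in (0:ℝ)..t, S k l' s * D.Gam S Fb I R k l' s := fun l' =>
    calc _ = ∫ s in (0:ℝ)..t,
          (D.lam k (t - s) * D.q k l' l s t) * (S k l' s * D.Gam S Fb I R k l' s) := by
          congr 1; ext s; ring
      _ ≤ _ := intervalIntegral_mul_le_const_mul ht (hsol.intervalIntegrable_S_mul_Gam k l' ht)
          (fun s hs => mul_nonneg (hsol.S_nonneg k l' s hs.1) (hsol.Gam_nonneg k l' hs.1))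
          fun s hs => ⟨mul_nonneg (D.lam_mem k _).1 (D.q_mem k l' l s t hs.1 hs.2).1,
            mul_le_of_le_one_right (D.lam_mem k _).1 (D.q_mem k l' l s t hs.1 hs.2).2
              |>.trans (D.lam_mem k _).2⟩
  calc Fb k l t ≤ D.lamStar * ∑ l', D.I0 k l'
        + ∑ l', D.lamStar * ∫ s in (0:ℝ)..t, S k l' s * D.Gam S Fb I R k l' s := by
        rw [hsol.eqF k l t ht]
        exact add_le_add hinitial (Finset.sum_le_sum fun l' _ => hnew l')
    _ ≤ D.lamStar * ∑ l', D.I0 k l' + D.lamStar * ∑ l', D.S0 k l' := by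
        rw [← Finset.mul_sum]
        have := mul_le_mul_of_nonneg_left (hsol.sum_integral_S_mul_Gam_le k ht) D.lamStar_pos.le
        linarith
    _ = D.lamStar * (∑ l', D.I0 k l' + ∑ l', D.S0 k l') := by ring

lemma sum_Fb_le (hsol : IsMPMGSol D S Fb I R) (k : Fin K) {t : ℝ} (ht : 0 ≤ t) :
    ∑ l, Fb k l t ≤ D.lamStar * L :=
  calc ∑ l, Fb k l t ≤ ∑ _l : Fin L, D.lamStar * (∑ l', D.I0 k l' + ∑ l', D.S0 k l') :=
        Finset.sum_le_sum fun l _ => hsol.Fb_le k l ht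
    _ = L * (D.lamStar * (∑ l', D.I0 k l' + ∑ l', D.S0 k l')) := by simp
    _ ≤ L * (D.lamStar * 1) := by
        gcongr
        · exact D.lamStar_pos.le
        · exact D.sum_I0_add_sum_S0_le_one k
    _ = D.lamStar * L := by ring

end IsMPMGSol

theorem mpmg_total_force_apriori_bound_general
    (K L : ℕ) (D : MPMGData K L)
    (S Fb I R : Fin K → Fin L → ℝ → ℝ) (hsol : IsMPMGSol D S Fb I R) :
    ∀ t : ℝ, 0 ≤ t →
      ∑ k, ∑ l, Fb k l t
        ≤ D.lamStar * L * K * Real.exp (D.lamStar * D.betaStar * L * K * t) := by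
  intro t ht
  have hlam := D.lamStar_pos.le
  have hexp : 1 ≤ Real.exp (D.lamStar * D.betaStar * L * K * t) :=
    Real.one_le_exp (by have := D.betaStar_pos.le; positivity)
  calc ∑ k, ∑ l, Fb k l t ≤ ∑ _k : Fin K, D.lamStar * L :=
        Finset.sum_le_sum fun k _ => hsol.sum_Fb_le k ht
    _ = D.lamStar * L * K := by simp [mul_comm]
    _ ≤ D.lamStar * L * K * Real.exp (D.lamStar * D.betaStar * L * K * t) :=
        le_mul_of_one_le_right (by positivity) hexp

/-- A priori bound on the total force of infection:
`∑_{k,ℓ} F̄_k^ℓ(t) ≤ λ* L K e^{λ* β* L K t}` for all `t ≥ 0`. -/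
theorem mpmg_total_force_apriori_bound
    (K L : ℕ) (hK : 1 ≤ K) (hL : 1 ≤ L) (D : MPMGData K L)
    (S Fb I R : Fin K → Fin L → ℝ → ℝ) (hsol : IsMPMGSol D S Fb I R) :
    ∀ t : ℝ, 0 ≤ t →
      ∑ k, ∑ l, Fb k l t
        ≤ D.lamStar * L * K * Real.exp (D.lamStar * D.betaStar * L * K * t) :=
  mpmg_total_force_apriori_bound_general K L D S Fb I R hsol
end

section
/- For any solution of the multipatch–multigroup limit system and any T > 0, setting ν̄_k^ℓ := sup_{s∈[0,T]} max{ −ν_{S,k}^{ℓ,ℓ}(s), −ν_{I,k}^{ℓ,ℓ}(s), −ν_{R,k}^{ℓ,ℓ}(s) }, one has the lower bound B̄_k^ℓ(t) ≥ B̄_k^ℓ(0) e^{−ν̄_k^ℓ t} for all t ∈ [0,T] and all k, ℓ. In particular, for every k, ℓ and T > 0 there exists a constant C_{k,T}^ℓ > 0 such that B̄_k^ℓ(t) ≥ C_{k,T}^ℓ for all t ∈ [0,T]. -/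
open MeasureTheory

/-! Adding (i), (iii) and (iv), the infection and recovery terms cancel: the total
`B = S + I + R` of a group-patch pair changes only through migration. Migration into patch `ℓ`
from the other patches is nonnegative and the diagonal rates are at least `-ν̄`, so the net
migration is at least `-ν̄ B`. Hence `e^{ν̄ t} B(t)`, which is absolutely continuous, has a.e.
nonnegative derivative and is nondecreasing. -/

open Set

theorem intervalIntegrable_mul_of_abs_le {f g : ℝ → ℝ} {a b Cf Cg : ℝ} (hab : a ≤ b)
    (hf : Measurable f) (hg : Measurable g) (hfC : ∀ s ∈ Icc a b, |f s| ≤ Cf)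
    (hgC : ∀ s ∈ Icc a b, |g s| ≤ Cg) : IntervalIntegrable (fun s => f s * g s) volume a b := by
  rw [intervalIntegrable_iff_integrableOn_Icc_of_le hab]
  refine Measure.integrableOn_of_bounded measure_Icc_lt_top.ne (hf.mul hg).aestronglyMeasurable
    (M := Cf * Cg) ((ae_restrict_iff' measurableSet_Icc).2 (Filter.Eventually.of_forall
      fun s hs => ?_))
  rw [Real.norm_eq_abs, abs_mul]
  exact mul_le_mul (hfC s hs) (hgC s hs) (abs_nonneg _) ((abs_nonneg _).trans (hfC s hs))

theorem mul_exp_neg_mul_le_add_integral {φ : ℝ → ℝ} {c y₀ t : ℝ} (ht : 0 ≤ t)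
    (hφ : IntervalIntegrable φ volume 0 t)
    (hlow : ∀ s ∈ Icc 0 t, -c * (y₀ + ∫ u in 0..s, φ u) ≤ φ s) :
    y₀ * Real.exp (-c * t) ≤ y₀ + ∫ u in 0..t, φ u := by
  set y : ℝ → ℝ := fun s => y₀ + ∫ u in 0..s, φ u
  have hexp : AbsolutelyContinuousOnInterval (fun s => Real.exp (c * s)) 0 t :=
    ContDiffOn.absolutelyContinuousOnInterval (by fun_prop)
  have hy : AbsolutelyContinuousOnInterval y 0 t :=
    (LipschitzWith.const y₀).lipschitzOnWith.absolutelyContinuousOnInterval.add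
      (hφ.absolutelyContinuousOnInterval_intervalIntegral left_mem_uIcc)
  have hmono : 0 ≤ Real.exp (c * t) * y t - Real.exp (c * 0) * y 0 := by
    rw [← hexp.integral_deriv_mul_eq_sub hy]
    refine intervalIntegral.integral_nonneg_of_ae_restrict ht ?_
    rw [← uIcc_of_le ht, Filter.EventuallyLE, ae_restrict_iff' measurableSet_uIcc]
    filter_upwards [hφ.ae_hasDerivAt_integral] with s hderiv hs
    have hy' : deriv y s = φ s := ((hderiv hs 0 left_mem_uIcc).const_add y₀).deriv
    have hexp' : deriv (fun s => Real.exp (c * s)) s = c * Real.exp (c * s) := by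
      simpa [mul_comm] using ((hasDerivAt_id s).const_mul c).exp.deriv
    have hφs := hlow s (by rwa [uIcc_of_le ht] at hs)
    rw [Pi.zero_apply, hy', hexp']
    nlinarith [Real.exp_pos (c * s)]
  have hy0 : y 0 = y₀ := by simp [y]
  rw [hy0, mul_zero, Real.exp_zero, one_mul, sub_nonneg] at hmono
  calc y₀ * Real.exp (-c * t) ≤ Real.exp (c * t) * y t * Real.exp (-c * t) := by gcongr
    _ = y t := by rw [mul_right_comm, ← Real.exp_add]; simp

namespace MPMGData

variable {K L : ℕ} (D : MPMGData K L)

def maxExitRate (k : Fin K) (l : Fin L) (s : ℝ) : ℝ :=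
  max (-(D.nuS k l l s)) (max (-(D.nuI k l l s)) (-(D.nuR k l l s)))

def netMigration (S I R : Fin K → Fin L → ℝ → ℝ) (k : Fin K) (l : Fin L) (s : ℝ) : ℝ :=
  ∑ l', (D.nuS k l' l s * S k l' s + D.nuI k l' l s * I k l' s + D.nuR k l' l s * R k l' s)

theorem maxExitRate_le_sSup (k : Fin K) (l : Fin L) {T s : ℝ} (hs : s ∈ Icc 0 T) :
    D.maxExitRate k l s ≤ sSup (D.maxExitRate k l '' Icc 0 T) := by
  obtain ⟨CS, hCS⟩ := D.nuS_bdd k l l T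
  obtain ⟨CI, hCI⟩ := D.nuI_bdd k l l T
  obtain ⟨CR, hCR⟩ := D.nuR_bdd k l l T
  refine le_csSup ⟨max CS (max CI CR), ?_⟩ (mem_image_of_mem _ hs)
  rintro _ ⟨s, hs, rfl⟩
  exact max_le_max ((neg_le_abs _).trans (hCS s hs))
    (max_le_max ((neg_le_abs _).trans (hCI s hs)) ((neg_le_abs _).trans (hCR s hs)))

theorem neg_mul_total_le_netMigration {S I R : Fin K → Fin L → ℝ → ℝ} {k : Fin K} {l : Fin L}
    {s c : ℝ} (hs : 0 ≤ s) (hS : ∀ l', 0 ≤ S k l' s) (hI : ∀ l', 0 ≤ I k l' s)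
    (hR : ∀ l', 0 ≤ R k l' s) (hc : D.maxExitRate k l s ≤ c) :
    -c * (S k l s + I k l s + R k l s) ≤ D.netMigration S I R k l s := by
  have immigration_nonneg : 0 ≤ ∑ l' ∈ Finset.univ.erase l,
      (D.nuS k l' l s * S k l' s + D.nuI k l' l s * I k l' s + D.nuR k l' l s * R k l' s) := by
    refine Finset.sum_nonneg fun l' hl' => ?_
    have hne := (Finset.ne_of_mem_erase hl').symm
    have := mul_nonneg (D.nuS_nonneg k l' l s hs hne) (hS l')
    have := mul_nonneg (D.nuI_nonneg k l' l s hs hne) (hI l')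
    have := mul_nonneg (D.nuR_nonneg k l' l s hs hne) (hR l')
    linarith
  obtain ⟨hcS, hcI, hcR⟩ : -c ≤ D.nuS k l l s ∧ -c ≤ D.nuI k l l s ∧ -c ≤ D.nuR k l l s := by
    simp only [maxExitRate, max_le_iff] at hc
    exact ⟨by linarith, by linarith, by linarith⟩
  rw [netMigration, ← Finset.sum_erase_add _ _ (Finset.mem_univ l)]
  nlinarith [hS l, hI l, hR l]

end MPMGData

namespace IsMPMGSol

variable {K L : ℕ} {D : MPMGData K L} {S Fb I R : Fin K → Fin L → ℝ → ℝ}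

theorem exists_abs_le (hsol : IsMPMGSol D S Fb I R) (T : ℝ) :
    ∃ C, ∀ k l, ∀ s ∈ Icc 0 T, |S k l s| ≤ C ∧ |I k l s| ≤ C ∧ |R k l s| ≤ C := by
  obtain ⟨C, hC⟩ := hsol.locBdd T
  refine ⟨C, fun k l s hs => ⟨?_, ?_, ?_⟩⟩
  · rw [abs_of_nonneg (hsol.S_nonneg k l s hs.1)]; exact (hC k l s hs).1
  · rw [abs_of_nonneg (hsol.I_nonneg k l s hs.1)]; exact (hC k l s hs).2.2.1
  · rw [abs_of_nonneg (hsol.R_nonneg k l s hs.1)]; exact (hC k l s hs).2.2.2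

theorem intervalIntegrable_migrationTerms (hsol : IsMPMGSol D S Fb I R) (k : Fin K) (l : Fin L)
    {t : ℝ} (ht : 0 ≤ t) (l' : Fin L) :
    IntervalIntegrable (fun s => D.nuS k l' l s * S k l' s) volume 0 t ∧
      IntervalIntegrable (fun s => D.nuI k l' l s * I k l' s) volume 0 t ∧
      IntervalIntegrable (fun s => D.nuR k l' l s * R k l' s) volume 0 t := by
  obtain ⟨C, hC⟩ := hsol.exists_abs_le t
  obtain ⟨CS, hCS⟩ := D.nuS_bdd k l' l t
  obtain ⟨CI, hCI⟩ := D.nuI_bdd k l' l t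
  obtain ⟨CR, hCR⟩ := D.nuR_bdd k l' l t
  exact ⟨intervalIntegrable_mul_of_abs_le ht (D.nuS_meas k l' l) (hsol.S_meas k l') hCS
      fun s hs => (hC k l' s hs).1,
    intervalIntegrable_mul_of_abs_le ht (D.nuI_meas k l' l) (hsol.I_meas k l') hCI
      fun s hs => (hC k l' s hs).2.1,
    intervalIntegrable_mul_of_abs_le ht (D.nuR_meas k l' l) (hsol.R_meas k l') hCR
      fun s hs => (hC k l' s hs).2.2⟩

theorem intervalIntegrable_netMigration (hsol : IsMPMGSol D S Fb I R) (k : Fin K) (l : Fin L)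
    {t : ℝ} (ht : 0 ≤ t) :
    IntervalIntegrable (D.netMigration S I R k l) volume 0 t := by
  have hint := hsol.intervalIntegrable_migrationTerms k l ht
  have hsum : D.netMigration S I R k l = ∑ l', fun s =>
      D.nuS k l' l s * S k l' s + D.nuI k l' l s * I k l' s + D.nuR k l' l s * R k l' s := by
    funext s
    simp only [MPMGData.netMigration, Finset.sum_apply]
  rw [hsum]
  exact IntervalIntegrable.sum _ fun l' _ => ((hint l').1.add (hint l').2.1).add (hint l').2.2

theorem total_eq_add_integral_netMigration (hsol : IsMPMGSol D S Fb I R) (k : Fin K)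
    (l : Fin L) {t : ℝ} (ht : 0 ≤ t) :
    S k l t + I k l t + R k l t =
      D.S0 k l + D.I0 k l + D.R0 k l + ∫ s in 0..t, D.netMigration S I R k l s := by
  have hint := hsol.intervalIntegrable_migrationTerms k l ht
  have hsplit : ∫ s in 0..t, D.netMigration S I R k l s =
      (∑ l', ∫ s in 0..t, D.nuS k l' l s * S k l' s)
        + (∑ l', ∫ s in 0..t, D.nuI k l' l s * I k l' s)
        + ∑ l', ∫ s in 0..t, D.nuR k l' l s * R k l' s := by
    simp only [MPMGData.netMigration]
    rw [intervalIntegral.integral_finsetSum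
      fun l' _ => ((hint l').1.add (hint l').2.1).add (hint l').2.2,
      ← Finset.sum_add_distrib, ← Finset.sum_add_distrib]
    refine Finset.sum_congr rfl fun l' _ => ?_
    rw [intervalIntegral.integral_add ((hint l').1.add (hint l').2.1) (hint l').2.2,
      intervalIntegral.integral_add (hint l').1 (hint l').2.1]
  have := hsol.eqS k l t ht
  have := hsol.eqI k l t ht
  have := hsol.eqR k l t ht
  rw [hsplit]
  linarith

end IsMPMGSol

theorem mpmg_B_lower_bound_general
    (K L : ℕ) (D : MPMGData K L)
    (S Fb I R : Fin K → Fin L → ℝ → ℝ) (hsol : IsMPMGSol D S Fb I R) :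
    ∀ T : ℝ, 0 < T → ∀ k l,
      (∀ t ∈ Set.Icc (0:ℝ) T,
        (D.S0 k l + D.I0 k l + D.R0 k l) *
            Real.exp (-(sSup ((fun s : ℝ =>
                max (-(D.nuS k l l s)) (max (-(D.nuI k l l s)) (-(D.nuR k l l s))))
              '' Set.Icc (0:ℝ) T)) * t)
          ≤ S k l t + I k l t + R k l t) ∧
      (∃ C : ℝ, 0 < C ∧ ∀ t ∈ Set.Icc (0:ℝ) T, C ≤ S k l t + I k l t + R k l t) := by
  intro T _ k l
  set rate := sSup (D.maxExitRate k l '' Icc 0 T)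
  have hlower : ∀ t ∈ Icc 0 T,
      (D.S0 k l + D.I0 k l + D.R0 k l) * Real.exp (-rate * t) ≤ S k l t + I k l t + R k l t := by
    intro t ht
    rw [hsol.total_eq_add_integral_netMigration k l ht.1]
    refine mul_exp_neg_mul_le_add_integral ht.1 (hsol.intervalIntegrable_netMigration k l ht.1)
      fun s hs => ?_
    rw [← hsol.total_eq_add_integral_netMigration k l hs.1]
    exact D.neg_mul_total_le_netMigration hs.1 (fun l' => hsol.S_nonneg k l' s hs.1)
      (fun l' => hsol.I_nonneg k l' s hs.1) (fun l' => hsol.R_nonneg k l' s hs.1)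
      (D.maxExitRate_le_sSup k l ⟨hs.1, hs.2.trans ht.2⟩)
  refine ⟨hlower, (D.S0 k l + D.I0 k l + D.R0 k l) * Real.exp (-|rate| * T),
    mul_pos (D.B0_pos k l) (Real.exp_pos _), fun t ht => le_trans ?_ (hlower t ht)⟩
  have : rate * t ≤ |rate| * T := by
    nlinarith [le_abs_self rate, abs_nonneg rate, ht.1, ht.2]
  exact mul_le_mul_of_nonneg_left (Real.exp_le_exp.2 (by linarith)) (D.B0_pos k l).le

/-- Lower bound on the group-patch total: with
`ν̄_k^ℓ = sup_{s∈[0,T]} max{−ν_{S,k}^{ℓ,ℓ}(s), −ν_{I,k}^{ℓ,ℓ}(s), −ν_{R,k}^{ℓ,ℓ}(s)}`,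
one has `B̄_k^ℓ(t) ≥ B̄_k^ℓ(0) e^{−ν̄_k^ℓ t}` on `[0,T]`; in particular
`B̄_k^ℓ` is bounded below by a positive constant on `[0,T]`. -/
theorem mpmg_B_lower_bound
    (K L : ℕ) (hK : 1 ≤ K) (hL : 1 ≤ L) (D : MPMGData K L)
    (S Fb I R : Fin K → Fin L → ℝ → ℝ) (hsol : IsMPMGSol D S Fb I R) :
    ∀ T : ℝ, 0 < T → ∀ k l,
      (∀ t ∈ Set.Icc (0:ℝ) T,
        (D.S0 k l + D.I0 k l + D.R0 k l) *
            Real.exp (-(sSup ((fun s : ℝ =>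
                max (-(D.nuS k l l s)) (max (-(D.nuI k l l s)) (-(D.nuR k l l s))))
              '' Set.Icc (0:ℝ) T)) * t)
          ≤ S k l t + I k l t + R k l t) ∧
      (∃ C : ℝ, 0 < C ∧ ∀ t ∈ Set.Icc (0:ℝ) T, C ≤ S k l t + I k l t + R k l t) :=
  mpmg_B_lower_bound_general K L D S Fb I R hsol
end

section
/- For any solution of the multipatch–multigroup limit system and any T > 0, there exists a constant C_T > 0 such that Γ̄_k^ℓ(t) ≤ C_T for all t ∈ [0,T] and all k ∈ {1,…,K}, ℓ ∈ {1,…,L}. -/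
/-!
Adding equations (i), (iii) and (iv), the infection and recovery terms cancel, so each total
population `B̄_k^ℓ = S̄_k^ℓ + Ī_k^ℓ + R̄_k^ℓ` equals its initial value plus primitives of
bounded migration fluxes. Hence it is continuous on `[0, T]`; being positive there, it is bounded
below by some `ε > 0` on this compact interval, uniformly in the finitely many `k, ℓ`.
Then `Γ̄_k^ℓ ≤ ε^{-γ} K L β* sup F̄`.
-/

open MeasureTheory

open Set Filter Topology

lemma continuousOn_primitive_of_abs_le {f : ℝ → ℝ} {T C : ℝ} (hT : 0 ≤ T) (hf : Measurable f)
    (hC : ∀ s ∈ Icc 0 T, |f s| ≤ C) :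
    ContinuousOn (fun t => ∫ s in (0:ℝ)..t, f s) (Icc 0 T) := by
  have hint : IntegrableOn f (uIcc 0 T) := by
    rw [uIcc_of_le hT]
    exact Measure.integrableOn_of_bounded measure_Icc_lt_top.ne hf.aestronglyMeasurable
      ((ae_restrict_iff' measurableSet_Icc).2 (ae_of_all _ hC))
  simpa only [uIcc_of_le hT] using intervalIntegral.continuousOn_primitive_interval hint

lemma continuousOn_sum_primitive_mul {ι : Type*} [Fintype ι] {T : ℝ} (hT : 0 ≤ T)
    {ν X : ι → ℝ → ℝ} (hν : ∀ i, Measurable (ν i)) (hX : ∀ i, Measurable (X i))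
    (hνb : ∀ i, ∃ C, ∀ t ∈ Icc 0 T, |ν i t| ≤ C) (hXb : ∀ i, ∃ C, ∀ t ∈ Icc 0 T, |X i t| ≤ C) :
    ContinuousOn (fun t => ∑ i, ∫ s in (0:ℝ)..t, ν i s * X i s) (Icc 0 T) := by
  refine continuousOn_finsetSum _ fun i _ => ?_
  obtain ⟨a, ha⟩ := hνb i
  obtain ⟨b, hb⟩ := hXb i
  refine continuousOn_primitive_of_abs_le (C := a * b) hT ((hν i).mul (hX i)) fun s hs => ?_
  rw [abs_mul]
  exact mul_le_mul (ha s hs) (hb s hs) (abs_nonneg _) ((abs_nonneg _).trans (ha s hs))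

namespace IsMPMGSol

variable {K L : ℕ} {D : MPMGData K L} {S Fb I R : Fin K → Fin L → ℝ → ℝ}

lemma total_eq (hsol : IsMPMGSol D S Fb I R) (k : Fin K) (l : Fin L) {t : ℝ} (ht : 0 ≤ t) :
    S k l t + I k l t + R k l t =
      (D.S0 k l + D.I0 k l + D.R0 k l)
        + (∑ l', ∫ s in (0:ℝ)..t, D.nuS k l' l s * S k l' s)
        + (∑ l', ∫ s in (0:ℝ)..t, D.nuI k l' l s * I k l' s)
        + ∑ l', ∫ s in (0:ℝ)..t, D.nuR k l' l s * R k l' s := by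
  rw [hsol.eqS k l t ht, hsol.eqI k l t ht, hsol.eqR k l t ht]
  ring

lemma continuousOn_total (hsol : IsMPMGSol D S Fb I R) (k : Fin K) (l : Fin L) {T : ℝ}
    (hT : 0 ≤ T) : ContinuousOn (fun t => S k l t + I k l t + R k l t) (Icc 0 T) := by
  obtain ⟨C, hC⟩ := hsol.locBdd T
  have hbound : ∀ {X : Fin K → Fin L → ℝ → ℝ}, (∀ k l t, 0 ≤ t → 0 ≤ X k l t) →
      (∀ k l, ∀ t ∈ Icc 0 T, X k l t ≤ C) → ∀ l', ∃ C', ∀ t ∈ Icc 0 T, |X k l' t| ≤ C' :=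
    fun hnn hle l' =>
      ⟨C, fun t ht => (abs_of_nonneg (hnn k l' t ht.1)).trans_le (hle k l' t ht)⟩
  refine ContinuousOn.congr (((continuousOn_const.add ?_).add ?_).add ?_)
    fun t ht => hsol.total_eq k l ht.1
  · exact continuousOn_sum_primitive_mul hT (fun l' => D.nuS_meas k l' l)
      (fun l' => hsol.S_meas k l') (fun l' => D.nuS_bdd k l' l T)
      (hbound hsol.S_nonneg fun k l t ht => (hC k l t ht).1)
  · exact continuousOn_sum_primitive_mul hT (fun l' => D.nuI_meas k l' l)
      (fun l' => hsol.I_meas k l') (fun l' => D.nuI_bdd k l' l T)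
      (hbound hsol.I_nonneg fun k l t ht => (hC k l t ht).2.2.1)
  · exact continuousOn_sum_primitive_mul hT (fun l' => D.nuR_meas k l' l)
      (fun l' => hsol.R_meas k l') (fun l' => D.nuR_bdd k l' l T)
      (hbound hsol.R_nonneg fun k l t ht => (hC k l t ht).2.2.2)

lemma eventually_le_total (hsol : IsMPMGSol D S Fb I R) (k : Fin K) (l : Fin L) {T : ℝ}
    (hT : 0 ≤ T) : ∀ᶠ ε in 𝓝[>] 0, ∀ t ∈ Icc 0 T, ε ≤ S k l t + I k l t + R k l t := by
  obtain ⟨t₀, ht₀, hmin⟩ :=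
    isCompact_Icc.exists_isMinOn (nonempty_Icc.2 hT) (hsol.continuousOn_total k l hT)
  filter_upwards [Ioo_mem_nhdsGT (hsol.B_pos k l t₀ ht₀.1)] with ε hε t ht
  exact hε.2.le.trans (hmin ht)

lemma exists_pos_le_total (hsol : IsMPMGSol D S Fb I R) {T : ℝ} (hT : 0 ≤ T) :
    ∃ ε > 0, ∀ k l, ∀ t ∈ Icc 0 T, ε ≤ S k l t + I k l t + R k l t := by
  have h := eventually_all.2 fun k => eventually_all.2 fun l => hsol.eventually_le_total k l hT
  exact (h.and self_mem_nhdsWithin).exists.imp fun ε hε => ⟨hε.2, hε.1⟩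

end IsMPMGSol

lemma MPMGData.Gam_le {K L : ℕ} (D : MPMGData K L) {S Fb I R : Fin K → Fin L → ℝ → ℝ}
    {k : Fin K} {l : Fin L} {t ε C : ℝ} (ht : 0 ≤ t) (hε : 0 < ε)
    (hB : ε ≤ S k l t + I k l t + R k l t) (hF : ∀ k' l', 0 ≤ Fb k' l' t ∧ Fb k' l' t ≤ C) :
    D.Gam S Fb I R k l t ≤ ε ^ (-D.gam) * (K * L * (D.betaStar * C)) := by
  have hrpow : (S k l t + I k l t + R k l t) ^ (-D.gam) ≤ ε ^ (-D.gam) :=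
    Real.rpow_le_rpow_of_nonpos hε hB (neg_nonpos.2 D.gam_nonneg)
  have hsum : ∑ k', ∑ l', D.beta k k' l l' t * Fb k' l' t ≤ K * L * (D.betaStar * C) := by
    calc ∑ k', ∑ l', D.beta k k' l l' t * Fb k' l' t
        ≤ ∑ _k' : Fin K, ∑ _l' : Fin L, D.betaStar * C :=
          Finset.sum_le_sum fun k' _ => Finset.sum_le_sum fun l' _ =>
            mul_le_mul (D.beta_mem k k' l l' t ht).2 (hF k' l').2 (hF k' l').1
              D.betaStar_pos.le
      _ = K * L * (D.betaStar * C) := by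
          simp only [Finset.sum_const, Finset.card_univ, Fintype.card_fin, nsmul_eq_mul]
          ring
  have hsum_nonneg : 0 ≤ ∑ k', ∑ l', D.beta k k' l l' t * Fb k' l' t :=
    Finset.sum_nonneg fun k' _ => Finset.sum_nonneg fun l' _ =>
      mul_nonneg (D.beta_mem k k' l l' t ht).1 (hF k' l').1
  exact mul_le_mul hrpow hsum hsum_nonneg (Real.rpow_nonneg hε.le _)

theorem mpmg_Gamma_bounded_general
    (K L : ℕ) (D : MPMGData K L)
    (S Fb I R : Fin K → Fin L → ℝ → ℝ) (hsol : IsMPMGSol D S Fb I R) :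
    ∀ T : ℝ, 0 < T → ∃ C : ℝ, 0 < C ∧
      ∀ t ∈ Set.Icc (0:ℝ) T, ∀ k l, D.Gam S Fb I R k l t ≤ C := by
  intro T hT
  obtain ⟨ε, hε, hB⟩ := hsol.exists_pos_le_total hT.le
  obtain ⟨C, hC⟩ := hsol.locBdd T
  refine ⟨max 1 (ε ^ (-D.gam) * (K * L * (D.betaStar * C))), lt_max_of_lt_left one_pos, ?_⟩
  intro t ht k l
  refine (D.Gam_le ht.1 hε (hB k l t ht) fun k' l' => ?_).trans (le_max_right _ _)
  exact ⟨hsol.Fb_nonneg k' l' t ht.1, (hC k' l' t ht).2.1⟩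

/-- For every `T > 0` there exists a constant `C_T > 0` bounding the force of
infection: `Γ̄_k^ℓ(t) ≤ C_T` for all `t ∈ [0,T]` and all `k, ℓ`. -/
theorem mpmg_Gamma_bounded
    (K L : ℕ) (hK : 1 ≤ K) (hL : 1 ≤ L) (D : MPMGData K L)
    (S Fb I R : Fin K → Fin L → ℝ → ℝ) (hsol : IsMPMGSol D S Fb I R) :
    ∀ T : ℝ, 0 < T → ∃ C : ℝ, 0 < C ∧
      ∀ t ∈ Set.Icc (0:ℝ) T, ∀ k l, D.Gam S Fb I R k l t ≤ C :=
  mpmg_Gamma_bounded_general K L D S Fb I R hsol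
end

section
/- Let T > 0, let ν : [0,T] → (−∞, 0] be Borel measurable and bounded, let b₀ > 0, and let ξ : [0,T] → ℝ be Borel measurable with ξ(t) ≥ −(1/4) b₀ exp(∫₀ᵗ ν(s) ds) and ξ(t) ≤ (1/4) b₀ exp(2 ∫₀ᵀ ν(s) ds) for all t ∈ [0,T]. If b : [0,T] → ℝ satisfies b(t) ≥ b₀ exp(∫₀ᵗ ν(s) ds) + ξ(t) + ∫₀ᵗ ν(s) exp(∫ₛᵗ ν(r) dr) ξ(s) ds for all t ∈ [0,T], then b(t) ≥ (1/2) b₀ exp(∫₀ᵗ ν(s) ds) for all t ∈ [0,T]. -/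
/-!
Write `F t = ∫₀ᵗ ν` and `M = (1/4) b₀ e^{2 F(T)}`. Since `ν ≤ 0`, every weight `e^{∫ₛᵗ ν}` lies
in `(0, 1]` and `F(T) ≤ F(t) ≤ 0`, so with `ξ ≤ M` the Duhamel integral is at least
`M F(t) ≥ M F(T)`. The elementary bound `y e^y ≥ -1` turns `M F(T) = (1/4) b₀ F(T) e^{2 F(T)}`
into `≥ -(1/4) b₀ e^{F(T)} ≥ -(1/4) b₀ e^{F(t)}`, and together with `ξ(t) ≥ -(1/4) b₀ e^{F(t)}`
this takes away at most half of `b₀ e^{F(t)}`.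
-/

open MeasureTheory Set Real intervalIntegral

theorem neg_exp_le_mul_exp_two_mul {y z : ℝ} (hyz : y ≤ z) : -exp z ≤ y * exp (2 * y) := by
  have hy : -1 ≤ y * exp y := by
    have h := mul_exp_neg_le_exp_neg_one (-y)
    rw [neg_neg] at h
    linarith [exp_le_one_iff.2 (by norm_num : (-1 : ℝ) ≤ 0)]
  calc -exp z ≤ -exp y := neg_le_neg (exp_le_exp.2 hyz)
    _ ≤ y * exp y * exp y := by nlinarith [exp_pos y]
    _ = y * exp (2 * y) := by rw [two_mul, exp_add]; ring

namespace intervalIntegral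

variable {f : ℝ → ℝ} {a b c : ℝ}

theorem integral_nonpos_of_forall_mem_Icc (hab : a ≤ b) (hf : ∀ u ∈ Icc a b, f u ≤ 0) :
    ∫ u in a..b, f u ≤ 0 := by
  have h := integral_nonneg (μ := volume) hab fun u hu => neg_nonneg.2 (hf u hu)
  rwa [integral_neg, neg_nonneg] at h

theorem integral_le_integral_of_nonpos (hab : a ≤ b) (hbc : b ≤ c)
    (hf : IntegrableOn f (Icc a c)) (hf_nonpos : ∀ u ∈ Icc a c, f u ≤ 0) :
    ∫ u in a..c, f u ≤ ∫ u in a..b, f u := by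
  have hab' := (intervalIntegrable_iff_integrableOn_Icc_of_le hab).2
    (hf.mono_set (Icc_subset_Icc_right hbc))
  have hbc' := (intervalIntegrable_iff_integrableOn_Icc_of_le hbc).2
    (hf.mono_set (Icc_subset_Icc_left hab))
  rw [← integral_add_adjacent_intervals hab' hbc']
  linarith [integral_nonpos_of_forall_mem_Icc hbc fun u hu => hf_nonpos u ⟨hab.trans hu.1, hu.2⟩]

end intervalIntegral

section Duhamel

variable {ν ξ : ℝ → ℝ} {a b : ℝ}

theorem intervalIntegrable_mul_exp_integral_mul {C : ℝ} (hab : a ≤ b)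
    (hν : IntegrableOn ν (Icc a b)) (hξ : AEStronglyMeasurable ξ (volume.restrict (Icc a b)))
    (hξC : ∀ s ∈ Icc a b, |ξ s| ≤ C) :
    IntervalIntegrable (fun s => ν s * exp (∫ r in s..b, ν r) * ξ s) volume a b := by
  rw [intervalIntegrable_iff_integrableOn_Icc_of_le hab]
  have hweight : ContinuousOn (fun s => exp (∫ r in s..b, ν r)) (Icc a b) := by
    have h := continuousOn_primitive_interval_left (μ := volume) (f := ν) (a := a) (b := b)
      (by rwa [uIcc_of_le hab])
    rw [uIcc_of_le hab] at h
    exact h.rexp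
  exact (hν.mul_continuousOn hweight isCompact_Icc).mul_bdd hξ
    (ae_restrict_of_forall_mem measurableSet_Icc hξC)

/-- The weights `e^{∫ₛᵇ ν}` lie in `(0, 1]`, so the integrand is `≥ M ν(s)` pointwise. -/
theorem mul_integral_le_integral_mul_exp_integral_mul {M : ℝ} (hab : a ≤ b)
    (hν : IntegrableOn ν (Icc a b)) (hν_nonpos : ∀ s ∈ Icc a b, ν s ≤ 0)
    (hξM : ∀ s ∈ Icc a b, ξ s ≤ M) (hM : 0 ≤ M)
    (hint : IntervalIntegrable (fun s => ν s * exp (∫ r in s..b, ν r) * ξ s) volume a b) :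
    M * ∫ s in a..b, ν s ≤ ∫ s in a..b, ν s * exp (∫ r in s..b, ν r) * ξ s := by
  rw [← intervalIntegral.integral_const_mul]
  refine integral_mono_on hab
    (((intervalIntegrable_iff_integrableOn_Icc_of_le hab).2 hν).const_mul M) hint fun s hs => ?_
  have hw : exp (∫ r in s..b, ν r) ≤ 1 := exp_le_one_iff.2 <|
    integral_nonpos_of_forall_mem_Icc hs.2 fun r hr => hν_nonpos r ⟨hs.1.trans hr.1, hr.2⟩
  have hνs := hν_nonpos s hs
  have hνw : ν s * exp (∫ r in s..b, ν r) ≤ 0 := mul_nonpos_of_nonpos_of_nonneg hνs (exp_pos _).le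
  nlinarith [mul_nonneg_of_nonpos_of_nonpos hνw (sub_nonpos.2 (hξM s hs)),
    mul_nonneg hM (mul_nonneg_of_nonpos_of_nonpos hνs (sub_nonpos.2 hw))]

end Duhamel

theorem half_lower_bound_from_duhamel_general
    (T : ℝ)
    (ν : ℝ → ℝ) (hν_meas : Measurable ν)
    (hν_bdd : ∃ C : ℝ, ∀ s ∈ Set.Icc (0:ℝ) T, |ν s| ≤ C)
    (hν_nonpos : ∀ s ∈ Set.Icc (0:ℝ) T, ν s ≤ 0)
    (b0 : ℝ) (hb0 : 0 < b0)
    (ξ : ℝ → ℝ) (hξ_meas : Measurable ξ)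
    (hξ_lo : ∀ t ∈ Set.Icc (0:ℝ) T,
      -(1/4 : ℝ) * b0 * Real.exp (∫ s in (0:ℝ)..t, ν s) ≤ ξ t)
    (hξ_hi : ∀ t ∈ Set.Icc (0:ℝ) T,
      ξ t ≤ (1/4 : ℝ) * b0 * Real.exp (2 * ∫ s in (0:ℝ)..T, ν s))
    (b : ℝ → ℝ)
    (hb : ∀ t ∈ Set.Icc (0:ℝ) T,
      b0 * Real.exp (∫ s in (0:ℝ)..t, ν s) + ξ t
        + (∫ s in (0:ℝ)..t, ν s * Real.exp (∫ r in s..t, ν r) * ξ s) ≤ b t) :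
    ∀ t ∈ Set.Icc (0:ℝ) T,
      (1/2 : ℝ) * b0 * Real.exp (∫ s in (0:ℝ)..t, ν s) ≤ b t := by
  obtain ⟨C, hC⟩ := hν_bdd
  have hν_int : IntegrableOn ν (Icc 0 T) :=
    Measure.integrableOn_of_bounded (M := C) (by simp [Real.volume_Icc])
      hν_meas.aestronglyMeasurable (ae_restrict_of_forall_mem measurableSet_Icc hC)
  have hF_nonpos : ∀ t ∈ Icc 0 T, ∫ s in 0..t, ν s ≤ 0 := fun t ht =>
    integral_nonpos_of_forall_mem_Icc ht.1 fun s hs => hν_nonpos s (Icc_subset_Icc_right ht.2 hs)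
  intro t ht
  have hsub : Icc 0 t ⊆ Icc 0 T := Icc_subset_Icc_right ht.2
  have hFT_le : ∫ s in 0..T, ν s ≤ ∫ s in 0..t, ν s :=
    integral_le_integral_of_nonpos ht.1 ht.2 hν_int hν_nonpos
  set M := (1/4 : ℝ) * b0 * exp (2 * ∫ s in 0..T, ν s)
  have hM_nonneg : 0 ≤ M := by positivity
  have hM_le : M ≤ 1/4 * b0 := mul_le_of_le_one_right (by positivity) <|
    exp_le_one_iff.2 (by linarith [hF_nonpos t ht])
  have hξ_abs : ∀ s ∈ Icc 0 T, |ξ s| ≤ 1/4 * b0 := fun s hs => by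
    have := exp_le_one_iff.2 (hF_nonpos s hs)
    rw [abs_le]
    constructor <;> nlinarith [hξ_lo s hs, hξ_hi s hs, exp_pos (∫ r in 0..s, ν r)]
  have hduhamel := mul_integral_le_integral_mul_exp_integral_mul ht.1 (hν_int.mono_set hsub)
    (fun s hs => hν_nonpos s (hsub hs)) (fun s hs => hξ_hi s (hsub hs)) hM_nonneg
    (intervalIntegrable_mul_exp_integral_mul ht.1 (hν_int.mono_set hsub)
      hξ_meas.aestronglyMeasurable fun s hs => hξ_abs s (hsub hs))
  have hMF : -(1/4) * b0 * exp (∫ s in 0..t, ν s) ≤ M * ∫ s in 0..t, ν s :=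
    calc -(1/4) * b0 * exp (∫ s in 0..t, ν s)
        ≤ 1/4 * b0 * ((∫ s in 0..T, ν s) * exp (2 * ∫ s in 0..T, ν s)) := by
          nlinarith [neg_exp_le_mul_exp_two_mul hFT_le]
      _ = M * ∫ s in 0..T, ν s := by ring
      _ ≤ M * ∫ s in 0..t, ν s := mul_le_mul_of_nonneg_left hFT_le hM_nonneg
  linarith [hb t ht, hξ_lo t ht]

/-- If `ν ≤ 0` on `[0,T]`, `b₀ > 0`, and the perturbation `ξ` satisfies
`ξ(t) ≥ −(1/4) b₀ e^{∫₀ᵗ ν}` and `ξ(t) ≤ (1/4) b₀ e^{2∫₀ᵀ ν}` on `[0,T]`, then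
any `b` satisfying the Duhamel lower bound
`b(t) ≥ b₀ e^{∫₀ᵗ ν} + ξ(t) + ∫₀ᵗ ν(s) e^{∫ₛᵗ ν} ξ(s) ds`
satisfies `b(t) ≥ (1/2) b₀ e^{∫₀ᵗ ν}` on `[0,T]`. -/
theorem half_lower_bound_from_duhamel
    (T : ℝ) (hT : 0 < T)
    (ν : ℝ → ℝ) (hν_meas : Measurable ν)
    (hν_bdd : ∃ C : ℝ, ∀ s ∈ Set.Icc (0:ℝ) T, |ν s| ≤ C)
    (hν_nonpos : ∀ s ∈ Set.Icc (0:ℝ) T, ν s ≤ 0)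
    (b0 : ℝ) (hb0 : 0 < b0)
    (ξ : ℝ → ℝ) (hξ_meas : Measurable ξ)
    (hξ_lo : ∀ t ∈ Set.Icc (0:ℝ) T,
      -(1/4 : ℝ) * b0 * Real.exp (∫ s in (0:ℝ)..t, ν s) ≤ ξ t)
    (hξ_hi : ∀ t ∈ Set.Icc (0:ℝ) T,
      ξ t ≤ (1/4 : ℝ) * b0 * Real.exp (2 * ∫ s in (0:ℝ)..T, ν s))
    (b : ℝ → ℝ)
    (hb : ∀ t ∈ Set.Icc (0:ℝ) T,
      b0 * Real.exp (∫ s in (0:ℝ)..t, ν s) + ξ t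
        + (∫ s in (0:ℝ)..t, ν s * Real.exp (∫ r in s..t, ν r) * ξ s) ≤ b t) :
    ∀ t ∈ Set.Icc (0:ℝ) T,
      (1/2 : ℝ) * b0 * Real.exp (∫ s in (0:ℝ)..t, ν s) ≤ b t :=
  half_lower_bound_from_duhamel_general T ν hν_meas hν_bdd hν_nonpos b0 hb0 ξ hξ_meas hξ_lo hξ_hi b
    hb
end

section
/- Let (Ω, 𝓕, ℙ) be a probability space, N ≥ 1 an integer, λ* > 0, and (X_j)_{j≥1} a sequence of i.i.d. integrable real random variables with |X_j| ≤ λ* almost surely and common mean μ = 𝔼[X_1]. Let M be a random variable taking values in {0, 1, …, N} that is independent of the sequence (X_j)_{j≥1}. Then 𝔼[ | N^{−1} ∑_{j=1}^{M} (X_j − μ) | ] ≤ λ*/√N. -/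
/-! Since `M` is independent of the sequence, the second moment of the random sum
`S_M = ∑_{j<M} (X_j - μ)` is a convex combination, over the values `m ≤ N` of `M`, of the
second moments of the fixed-length sums `S_m`. Each of these equals `m Var X_1 ≤ N λ*²`, by
independence and Popoviciu's inequality. Cauchy–Schwarz then gives `E|S_M| ≤ √N λ*`. -/

open MeasureTheory ProbabilityTheory

section RandomIndex

variable {Ω ι : Type*} {M : Ω → ι} {s : Finset ι}

lemma apply_eq_sum_indicator_preimage_singleton {E : Type*} [AddCommMonoid E]
    (hMs : ∀ ω, M ω ∈ s) (g : ι → Ω → E) (ω : Ω) :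
    g (M ω) ω = ∑ m ∈ s, (M ⁻¹' {m}).indicator (g m) ω := by
  rw [Finset.sum_eq_single_of_mem (M ω) (hMs ω)]
  · simp
  · intro m _ hm
    simp [Ne.symm hm]

variable [MeasurableSpace Ω] {P : Measure Ω} [MeasurableSpace ι] [MeasurableSingletonClass ι]

lemma memLp_randomIndex {E : Type*} [NormedAddCommGroup E] {p : ENNReal}
    (hM : Measurable M) (hMs : ∀ ω, M ω ∈ s) {g : ι → Ω → E}
    (hg : ∀ m ∈ s, MemLp (g m) p P) :
    MemLp (fun ω => g (M ω) ω) p P := by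
  simp_rw [apply_eq_sum_indicator_preimage_singleton hMs g]
  exact memLp_finsetSum s fun m hm => (hg m hm).indicator (hM (measurableSet_singleton m))

lemma integral_randomIndex_eq_sum_setIntegral {g : ι → Ω → ℝ} (hM : Measurable M)
    (hMs : ∀ ω, M ω ∈ s) (hg : ∀ m ∈ s, Integrable (g m) P) :
    ∫ ω, g (M ω) ω ∂P = ∑ m ∈ s, ∫ ω in M ⁻¹' {m}, g m ω ∂P := by
  simp_rw [apply_eq_sum_indicator_preimage_singleton hMs g]
  rw [integral_finsetSum s fun m hm => (hg m hm).indicator (hM (measurableSet_singleton m))]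
  exact Finset.sum_congr rfl fun m _ => integral_indicator (hM (measurableSet_singleton m))

lemma integral_randomIndex_le_of_indepFun [IsProbabilityMeasure P] {β : Type*}
    [MeasurableSpace β] {Z : Ω → β} (hM : Measurable M) (hMs : ∀ ω, M ω ∈ s)
    (hZ : AEMeasurable Z P) (hMZ : IndepFun M Z P) {f : ι → β → ℝ}
    (hf : ∀ m ∈ s, Measurable (f m)) (hfi : ∀ m ∈ s, Integrable (fun ω => f m (Z ω)) P)
    {C : ℝ} (hC : ∀ m ∈ s, ∫ ω, f m (Z ω) ∂P ≤ C) :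
    ∫ ω, f (M ω) (Z ω) ∂P ≤ C := by
  have hfiber : ∀ m ∈ s,
      ∫ ω in M ⁻¹' {m}, f m (Z ω) ∂P = P.real (M ⁻¹' {m}) * ∫ ω, f m (Z ω) ∂P :=
    fun m hm => ((IndepFun_iff_Indep M Z P).1 hMZ).setIntegral_eq_mul hM.comap_le hZ
      ⟨{m}, measurableSet_singleton m, rfl⟩ (hf m hm).aestronglyMeasurable
  have htotal : ∑ m ∈ s, P.real (M ⁻¹' {m}) = 1 := by
    rw [sum_measureReal_preimage_singleton s fun m _ => hM (measurableSet_singleton m),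
      Set.preimage_eq_univ_iff.2 fun _ ⟨ω, hω⟩ => hω ▸ hMs ω, probReal_univ]
  calc ∫ ω, f (M ω) (Z ω) ∂P
      = ∑ m ∈ s, P.real (M ⁻¹' {m}) * ∫ ω, f m (Z ω) ∂P := by
        rw [integral_randomIndex_eq_sum_setIntegral (g := fun m ω => f m (Z ω)) hM hMs hfi]
        exact Finset.sum_congr rfl hfiber
    _ ≤ ∑ m ∈ s, P.real (M ⁻¹' {m}) * C :=
        Finset.sum_le_sum fun m hm => mul_le_mul_of_nonneg_left (hC m hm) measureReal_nonneg
    _ = C := by rw [← Finset.sum_mul, htotal, one_mul]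

end RandomIndex

section Moments

variable {Ω : Type*} [MeasurableSpace Ω] {P : Measure Ω}

lemma variance_le_sq_of_abs_le [IsProbabilityMeasure P] {X : Ω → ℝ} {c : ℝ}
    (hX : AEMeasurable X P) (h : ∀ᵐ ω ∂P, |X ω| ≤ c) : variance X P ≤ c ^ 2 := by
  simpa using variance_le_sq_of_bounded (h.mono fun ω => abs_le.1) hX

lemma sq_integral_abs_le_integral_sq [IsProbabilityMeasure P] {f : Ω → ℝ} (hf : MemLp f 2 P) :
    (∫ ω, |f ω| ∂P) ^ 2 ≤ ∫ ω, f ω ^ 2 ∂P := by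
  have h := variance_nonneg |f| P
  rw [variance_eq_sub hf.abs] at h
  simpa [sq_abs] using h

lemma integral_sq_sum_sub_integral_le [IsFiniteMeasure P] {ι : Type*} {X : ι → Ω → ℝ}
    (hX : Pairwise fun i j => IndepFun (X i) (X j) P) (hL2 : ∀ i, MemLp (X i) 2 P)
    {σ2 : ℝ} (hvar : ∀ i, variance (X i) P ≤ σ2) (s : Finset ι) :
    ∫ ω, (∑ i ∈ s, (X i ω - P[X i])) ^ 2 ∂P ≤ s.card * σ2 := by
  have hmean : P[∑ i ∈ s, X i] = ∑ i ∈ s, P[X i] := by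
    simpa only [Finset.sum_apply] using
      integral_finsetSum s fun i _ => (hL2 i).integrable one_le_two
  calc ∫ ω, (∑ i ∈ s, (X i ω - P[X i])) ^ 2 ∂P
      = variance (∑ i ∈ s, X i) P := by
        rw [variance_eq_integral (memLp_finsetSum' s fun i _ => hL2 i).aemeasurable, hmean]
        simp [Finset.sum_sub_distrib]
    _ = ∑ i ∈ s, variance (X i) P :=
        IndepFun.variance_sum (fun i _ => hL2 i) fun i _ j _ hij => hX hij
    _ ≤ s.card * σ2 := by
        simpa using Finset.sum_le_sum fun i (_ : i ∈ s) => hvar i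

lemma integral_abs_randomSum_sub_integral_le [IsProbabilityMeasure P] {X : ℕ → Ω → ℝ}
    (hX : Pairwise fun i j => IndepFun (X i) (X j) P) (hL2 : ∀ j, MemLp (X j) 2 P) {σ2 : ℝ}
    (hvar : ∀ j, variance (X j) P ≤ σ2) {M : Ω → ℕ} {N : ℕ} (hM : Measurable M)
    (hMN : ∀ ω, M ω ≤ N) (hMX : IndepFun M (fun ω j => X j ω) P) :
    ∫ ω, |∑ j ∈ Finset.range (M ω), (X j ω - P[X j])| ∂P ≤ √(N * σ2) := by
  let S : ℕ → (ℕ → ℝ) → ℝ := fun m x => ∑ j ∈ Finset.range m, (x j - P[X j])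
  have hS_meas : ∀ m, Measurable (S m) := by fun_prop
  have hSL2 : ∀ m, MemLp (fun ω => S m (X · ω)) 2 P :=
    fun m => memLp_finsetSum _ fun j _ => (hL2 j).sub (memLp_const _)
  have hMs : ∀ ω, M ω ∈ Finset.range (N + 1) :=
    fun ω => Finset.mem_range.2 (Nat.lt_succ_of_le (hMN ω))
  have hS_sq : ∀ m ∈ Finset.range (N + 1), ∫ ω, S m (X · ω) ^ 2 ∂P ≤ N * σ2 := by
    intro m hm
    have hσ2 : 0 ≤ σ2 := (variance_nonneg _ _).trans (hvar 0)
    calc _ ≤ m * σ2 := by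
          simpa only [Finset.card_range] using
            integral_sq_sum_sub_integral_le hX hL2 hvar (Finset.range m)
      _ ≤ N * σ2 := by gcongr; exact_mod_cast Finset.mem_range_succ_iff.1 hm
  have hrand_sq : ∫ ω, S (M ω) (X · ω) ^ 2 ∂P ≤ N * σ2 :=
    integral_randomIndex_le_of_indepFun (f := fun m x => S m x ^ 2) hM hMs
      (aemeasurable_pi_lambda _ fun j => (hL2 j).aemeasurable) hMX
      (fun m _ => (hS_meas m).pow_const 2) (fun m _ => (hSL2 m).integrable_sq) hS_sq
  have hrandL2 : MemLp (fun ω => S (M ω) (X · ω)) 2 P :=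
    memLp_randomIndex (g := fun m ω => S m (X · ω)) hM hMs fun m _ => hSL2 m
  exact Real.le_sqrt_of_sq_le ((sq_integral_abs_le_integral_sq hrandL2).trans hrand_sq)

end Moments

theorem random_sum_centered_L1_bound_general
    {Ω : Type*} [MeasurableSpace Ω] (P : Measure Ω) [IsProbabilityMeasure P]
    (N : ℕ) (lamStar : ℝ)
    (X : ℕ → Ω → ℝ) (hX_meas : ∀ j, Measurable (X j))
    (hX_indep : iIndepFun X P)
    (hX_ident : ∀ j, IdentDistrib (X j) (X 0) P P)
    (hX_bdd : ∀ j, ∀ᵐ ω ∂P, |X j ω| ≤ lamStar)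
    (M : Ω → ℕ) (hM_meas : Measurable M) (hM_le : ∀ ω, M ω ≤ N)
    (hM_indep : IndepFun M (fun ω => fun j => X j ω) P) :
    ∫ ω, |(N : ℝ)⁻¹ * ∑ j ∈ Finset.range (M ω), (X j ω - ∫ ω', X 0 ω' ∂P)| ∂P
      ≤ lamStar / Real.sqrt N := by
  have hlam : 0 ≤ lamStar := by
    obtain ⟨ω, h⟩ := (hX_bdd 0).exists
    exact (abs_nonneg _).trans h
  have hL2 : ∀ j, MemLp (X j) 2 P := fun j =>
    memLp_of_bounded ((hX_bdd j).mono fun ω => abs_le.1) (hX_meas j).aestronglyMeasurable 2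
  have hsum := integral_abs_randomSum_sub_integral_le (fun i j hij => hX_indep.indepFun hij) hL2
    (fun j => variance_le_sq_of_abs_le (hX_meas j).aemeasurable (hX_bdd j)) hM_meas hM_le hM_indep
  simp only [fun j => (hX_ident j).integral_eq] at hsum
  calc _ = (N : ℝ)⁻¹ * ∫ ω, |∑ j ∈ Finset.range (M ω), (X j ω - ∫ ω', X 0 ω' ∂P)| ∂P := by
        simp [abs_mul, integral_const_mul]
    _ ≤ (N : ℝ)⁻¹ * √(N * lamStar ^ 2) := by gcongr
    _ = lamStar / √N := by
        rw [Real.sqrt_mul (Nat.cast_nonneg _), Real.sqrt_sq hlam, ← mul_assoc, inv_mul_eq_div,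
          Real.sqrt_div_self', one_div_mul_eq_div]

/-- For i.i.d. random variables `X_j` bounded by `λ*`, a random number of terms
`M ≤ N` independent of the sequence, and `μ = 𝔼[X_1]`, one has
`𝔼[ |N⁻¹ ∑_{j<M} (X_j − μ)| ] ≤ λ*/√N`. -/
theorem random_sum_centered_L1_bound
    {Ω : Type*} [MeasurableSpace Ω] (P : Measure Ω) [IsProbabilityMeasure P]
    (N : ℕ) (hN : 1 ≤ N) (lamStar : ℝ) (hlamStar : 0 < lamStar)
    (X : ℕ → Ω → ℝ) (hX_meas : ∀ j, Measurable (X j))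
    (hX_int : ∀ j, Integrable (X j) P)
    (hX_indep : iIndepFun X P)
    (hX_ident : ∀ j, IdentDistrib (X j) (X 0) P P)
    (hX_bdd : ∀ j, ∀ᵐ ω ∂P, |X j ω| ≤ lamStar)
    (M : Ω → ℕ) (hM_meas : Measurable M) (hM_le : ∀ ω, M ω ≤ N)
    (hM_indep : IndepFun M (fun ω => fun j => X j ω) P) :
    ∫ ω, |(N : ℝ)⁻¹ * ∑ j ∈ Finset.range (M ω), (X j ω - ∫ ω', X 0 ω' ∂P)| ∂P
      ≤ lamStar / Real.sqrt N :=
  random_sum_centered_L1_bound_general P N lamStar X hX_meas hX_indep hX_ident hX_bdd M hM_meas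
    hM_le hM_indep
end
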